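/- arXiv:1905.09081 — 3 statements merged into one kernel-verified Lean document; each statement's English description precedes it below -/
import Mathlib

section
/- If an STS(21) has two distinct flowers {A, B, C, D} and {A', B', C', D'} with stems D and D', then: (i) D and D' are disjoint; (ii) D ∪ E = D' ∪ E' for some petal E ∈ {A, B, C} and some petal E' ∈ {A', B', C'}; and (iii) the STS(21) has a sub-STS(9) with support D ∪ E. -/
variable {α : Type*} [DecidableEq α]

/-- `(S, B)` is a Steiner triple system: blocks are 3-subsets of `S`,
and every pair of distinct points of `S` lies in exactly one block. -/
def IsSTS (S : Finset α) (B : Finset (Finset α)) : Prop :=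
  (∀ b ∈ B, b ⊆ S ∧ b.card = 3) ∧
  ∀ p ∈ S, ∀ q ∈ S, p ≠ q → ∃! b, b ∈ B ∧ p ∈ b ∧ q ∈ b

/-- `T` is the block set of a transversal design with the three groups `A`, `B`, `C`:
every block meets every group in exactly one point, and every two points in
different groups meet in exactly one block. -/
def IsTD3 (A B C : Finset α) (T : Finset (Finset α)) : Prop :=
  (∀ b ∈ T, b ⊆ A ∪ B ∪ C ∧ (b ∩ A).card = 1 ∧ (b ∩ B).card = 1 ∧ (b ∩ C).card = 1) ∧
  ∀ p q : α, ((p ∈ A ∧ q ∈ B) ∨ (p ∈ A ∧ q ∈ C) ∨ (p ∈ B ∧ q ∈ C)) →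
    ∃! b, b ∈ T ∧ p ∈ b ∧ q ∈ b

/-- `C` is an almost-sub-STS of the block set `Bl`, with support `S0` and missing
triple `T`: `C ⊆ Bl` and `C = C' \ {T}` for some STS `(S0, C')` with `T ∈ C'`. -/
def IsAlmostSubSTS (Bl : Finset (Finset α)) (S0 : Finset α)
    (C : Finset (Finset α)) (T : Finset α) : Prop :=
  C ⊆ Bl ∧ T ∉ C ∧ IsSTS S0 (insert T C)

/-- The three petal conditions of a flower with stem `D`: a sub-STS(9) with support
`X ∪ D` and two almost-sub-STS(9)'s with supports `Y ∪ D`, `Z ∪ D` and missing triple `D`. -/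
def FlowerPetals (Bl : Finset (Finset α)) (D X Y Z : Finset α) : Prop :=
  (∃ C0, C0 ⊆ Bl ∧ IsSTS (X ∪ D) C0) ∧
  (∃ C1, IsAlmostSubSTS Bl (Y ∪ D) C1 D) ∧
  (∃ C2, IsAlmostSubSTS Bl (Z ∪ D) C2 D)

/-- A flower of an STS(21) `(S, Bl)` with petals `A`, `B`, `C` (size 6) and stem `D`
(size 3): a partition of `S` such that `Bl` has a sub-STS(9) and two
almost-sub-STS(9)'s with supports `A ∪ D`, `B ∪ D`, `C ∪ D` (in some order),
the missing triple of each almost-sub-STS being `D`. -/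
def IsFlower (S : Finset α) (Bl : Finset (Finset α)) (A B C D : Finset α) : Prop :=
  A ∪ B ∪ C ∪ D = S ∧ A.card = 6 ∧ B.card = 6 ∧ C.card = 6 ∧ D.card = 3 ∧
  Disjoint A B ∧ Disjoint A C ∧ Disjoint A D ∧
  Disjoint B C ∧ Disjoint B D ∧ Disjoint C D ∧
  (FlowerPetals Bl D A B C ∨ FlowerPetals Bl D B A C ∨ FlowerPetals Bl D C A B)

namespace TwoFlowersAux
set_option linter.unusedSectionVars false

variable {α : Type*} [DecidableEq α]

/-- The unique block through two points. -/
noncomputable def blk (Bl : Finset (Finset α)) (p q : α) : Finset α :=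
  @dite _ (∃! b, b ∈ Bl ∧ p ∈ b ∧ q ∈ b) (Classical.dec _) (fun h => h.exists.choose) (fun _ => ∅)

variable {S : Finset α} {Bl : Finset (Finset α)}

theorem blk_prop (hS : IsSTS S Bl) {p q : α} (hp : p ∈ S) (hq : q ∈ S) (hpq : p ≠ q) :
    blk Bl p q ∈ Bl ∧ p ∈ blk Bl p q ∧ q ∈ blk Bl p q := by
  have h := hS.2 p hp q hq hpq
  rw [blk, dif_pos h]
  exact h.exists.choose_spec

theorem blk_mem (hS : IsSTS S Bl) {p q : α} (hp : p ∈ S) (hq : q ∈ S) (hpq : p ≠ q) :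
    blk Bl p q ∈ Bl := (blk_prop hS hp hq hpq).1

theorem mem_blk_left (hS : IsSTS S Bl) {p q : α} (hp : p ∈ S) (hq : q ∈ S) (hpq : p ≠ q) :
    p ∈ blk Bl p q := (blk_prop hS hp hq hpq).2.1

theorem mem_blk_right (hS : IsSTS S Bl) {p q : α} (hp : p ∈ S) (hq : q ∈ S) (hpq : p ≠ q) :
    q ∈ blk Bl p q := (blk_prop hS hp hq hpq).2.2

theorem blk_unique (hS : IsSTS S Bl) {p q : α} (hp : p ∈ S) (hq : q ∈ S) (hpq : p ≠ q)
    {b : Finset α} (hb : b ∈ Bl) (hpb : p ∈ b) (hqb : q ∈ b) : b = blk Bl p q := by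
  have h := hS.2 p hp q hq hpq
  rw [blk, dif_pos h]
  exact h.unique ⟨hb, hpb, hqb⟩ h.exists.choose_spec

theorem blk_card (hS : IsSTS S Bl) {p q : α} (hp : p ∈ S) (hq : q ∈ S) (hpq : p ≠ q) :
    (blk Bl p q).card = 3 := (hS.1 _ (blk_mem hS hp hq hpq)).2

theorem blk_subset (hS : IsSTS S Bl) {p q : α} (hp : p ∈ S) (hq : q ∈ S) (hpq : p ≠ q) :
    blk Bl p q ⊆ S := (hS.1 _ (blk_mem hS hp hq hpq)).1

theorem blk_comm (hS : IsSTS S Bl) {p q : α} (hp : p ∈ S) (hq : q ∈ S) (hpq : p ≠ q) :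
    blk Bl p q = blk Bl q p :=
  blk_unique hS hq hp hpq.symm (blk_mem hS hp hq hpq) (mem_blk_right hS hp hq hpq)
    (mem_blk_left hS hp hq hpq)

/-- The third point of the block through `p` and `q`. -/
noncomputable def trd (Bl : Finset (Finset α)) (p q : α) : α :=
  @dite _ (∃ r, ((blk Bl p q).erase q).erase p = {r}) (Classical.dec _) (fun h => h.choose)
    (fun _ => p)

theorem erase_erase_blk (hS : IsSTS S Bl) {p q : α} (hp : p ∈ S) (hq : q ∈ S) (hpq : p ≠ q) :
    ((blk Bl p q).erase q).erase p = {trd Bl p q} := by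
  have h3 : (((blk Bl p q).erase q).erase p).card = 1 := by
    rw [Finset.card_erase_of_mem, Finset.card_erase_of_mem (mem_blk_right hS hp hq hpq),
      blk_card hS hp hq hpq]
    exact Finset.mem_erase.2 ⟨hpq, mem_blk_left hS hp hq hpq⟩
  obtain ⟨r, hr⟩ := Finset.card_eq_one.1 h3
  have h : ∃ r, ((blk Bl p q).erase q).erase p = {r} := ⟨r, hr⟩
  rw [trd, dif_pos h]
  exact h.choose_spec

theorem trd_mem_blk (hS : IsSTS S Bl) {p q : α} (hp : p ∈ S) (hq : q ∈ S) (hpq : p ≠ q) :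
    trd Bl p q ∈ blk Bl p q := by
  have := erase_erase_blk hS hp hq hpq
  have h : trd Bl p q ∈ ((blk Bl p q).erase q).erase p := by rw [this]; exact Finset.mem_singleton_self _
  exact Finset.mem_of_mem_erase (Finset.mem_of_mem_erase h)

theorem trd_ne_left (hS : IsSTS S Bl) {p q : α} (hp : p ∈ S) (hq : q ∈ S) (hpq : p ≠ q) :
    trd Bl p q ≠ p := by
  have := erase_erase_blk hS hp hq hpq
  have h : trd Bl p q ∈ ((blk Bl p q).erase q).erase p := by rw [this]; exact Finset.mem_singleton_self _
  exact (Finset.mem_erase.1 h).1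

theorem trd_ne_right (hS : IsSTS S Bl) {p q : α} (hp : p ∈ S) (hq : q ∈ S) (hpq : p ≠ q) :
    trd Bl p q ≠ q := by
  have := erase_erase_blk hS hp hq hpq
  have h : trd Bl p q ∈ ((blk Bl p q).erase q).erase p := by rw [this]; exact Finset.mem_singleton_self _
  exact (Finset.mem_erase.1 (Finset.mem_of_mem_erase h)).1

theorem trd_mem_S (hS : IsSTS S Bl) {p q : α} (hp : p ∈ S) (hq : q ∈ S) (hpq : p ≠ q) :
    trd Bl p q ∈ S := blk_subset hS hp hq hpq (trd_mem_blk hS hp hq hpq)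

theorem blk_eq_triple (hS : IsSTS S Bl) {p q : α} (hp : p ∈ S) (hq : q ∈ S) (hpq : p ≠ q) :
    blk Bl p q = {p, q, trd Bl p q} := by
  have h := erase_erase_blk hS hp hq hpq
  have hq' : q ∈ blk Bl p q := mem_blk_right hS hp hq hpq
  have hp' : p ∈ (blk Bl p q).erase q := Finset.mem_erase.2 ⟨hpq, mem_blk_left hS hp hq hpq⟩
  have e1 : (blk Bl p q).erase q = insert p {trd Bl p q} := by
    rw [← h]; exact (Finset.insert_erase hp').symm
  have e2 : blk Bl p q = insert q (insert p {trd Bl p q}) := by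
    rw [← e1]; exact (Finset.insert_erase hq').symm
  rw [e2]
  ext x
  simp only [Finset.mem_insert, Finset.mem_singleton]
  tauto

theorem eq_trd (hS : IsSTS S Bl) {p q r : α} (hp : p ∈ S) (hq : q ∈ S) (hpq : p ≠ q)
    (hr : r ∈ blk Bl p q) (hrp : r ≠ p) (hrq : r ≠ q) : r = trd Bl p q := by
  rw [blk_eq_triple hS hp hq hpq] at hr
  simp only [Finset.mem_insert, Finset.mem_singleton] at hr
  tauto

theorem trd_comm (hS : IsSTS S Bl) {p q : α} (hp : p ∈ S) (hq : q ∈ S) (hpq : p ≠ q) :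
    trd Bl p q = trd Bl q p := by
  apply eq_trd hS hq hp hpq.symm
  · rw [← blk_comm hS hp hq hpq]; exact trd_mem_blk hS hp hq hpq
  · exact trd_ne_right hS hp hq hpq
  · exact trd_ne_left hS hp hq hpq

theorem blk_eq_blk (hS : IsSTS S Bl) {p q r : α} (hp : p ∈ S) (hq : q ∈ S) (hr : r ∈ S)
    (hpq : p ≠ q) (hpr : p ≠ r) (hrblk : r ∈ blk Bl p q) : blk Bl p r = blk Bl p q :=
  (blk_unique hS hp hr hpr (blk_mem hS hp hq hpq) (mem_blk_left hS hp hq hpq) hrblk).symm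

theorem trd_invol (hS : IsSTS S Bl) {p q : α} (hp : p ∈ S) (hq : q ∈ S) (hpq : p ≠ q) :
    trd Bl p (trd Bl p q) = q := by
  have hr : trd Bl p q ∈ S := trd_mem_S hS hp hq hpq
  have hne : p ≠ trd Bl p q := (trd_ne_left hS hp hq hpq).symm
  have hblk : blk Bl p (trd Bl p q) = blk Bl p q :=
    blk_eq_blk hS hp hq hr hpq hne (trd_mem_blk hS hp hq hpq)
  apply (eq_trd hS hp hr hne _ hpq.symm (trd_ne_right hS hp hq hpq).symm).symm
  rw [hblk]; exact mem_blk_right hS hp hq hpq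

/-- a fixed-point-free involution on a finset forces even cardinality -/
theorem even_card_of_fpf (s : Finset α) (f : α → α) (hmem : ∀ x ∈ s, f x ∈ s)
    (hinv : ∀ x ∈ s, f (f x) = x) (hne : ∀ x ∈ s, f x ≠ x) : Even s.card := by
  induction s using Finset.strongInduction with
  | _ s ih =>
    rcases s.eq_empty_or_nonempty with rfl | ⟨x, hx⟩
    · simp
    · have hfx : f x ∈ s := hmem x hx
      have hxfx : f x ≠ x := hne x hx
      set t := (s.erase x).erase (f x) with ht
      have htsub : t ⊂ s := by
        apply Finset.ssubset_of_subset_of_ssubset (Finset.erase_subset _ _)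
        exact Finset.erase_ssubset hx
      have htmem : ∀ y, y ∈ t ↔ y ∈ s ∧ y ≠ x ∧ y ≠ f x := by
        intro y; simp only [ht, Finset.mem_erase]; tauto
      have h1 : ∀ y ∈ t, f y ∈ t := by
        intro y hy
        rw [htmem] at hy
        rw [htmem]
        refine ⟨hmem y hy.1, ?_, ?_⟩
        · intro h; apply hy.2.2; rw [← hinv y hy.1, h]
        · intro h; apply hy.2.1; rw [← hinv y hy.1, h, hinv x hx]
      have h2 : Even t.card := ih t htsub h1 (fun y hy => hinv y ((htmem y).1 hy).1)
        (fun y hy => hne y ((htmem y).1 hy).1)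
      have hcard : s.card = t.card + 2 := by
        have c1 : (s.erase x).card = s.card - 1 := Finset.card_erase_of_mem hx
        have hfx' : f x ∈ s.erase x := Finset.mem_erase.2 ⟨hxfx, hfx⟩
        have c2 : t.card = (s.erase x).card - 1 := Finset.card_erase_of_mem hfx'
        have hpos : 1 ≤ s.card := Finset.card_pos.2 ⟨x, hx⟩
        have hpos2 : 2 ≤ s.card := by
          have : ({x, f x} : Finset α) ⊆ s := by
            intro z hz; simp only [Finset.mem_insert, Finset.mem_singleton] at hz
            rcases hz with rfl | rfl; exact hx; exact hfx
          calc 2 = ({x, f x} : Finset α).card := by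
                rw [Finset.card_insert_of_notMem (by simpa using hxfx.symm), Finset.card_singleton]
               _ ≤ s.card := Finset.card_le_card this
        omega
      obtain ⟨k, hk⟩ := h2
      exact ⟨k + 1, by rw [hcard, hk]; omega⟩

end TwoFlowersAux
namespace TwoFlowersAux

set_option linter.unusedSectionVars false

variable {α : Type*} [DecidableEq α]

/-- A flower with full petal `X`, almost petals `Y`, `Z` and stem `D`. -/
structure Flower (S : Finset α) (Bl : Finset (Finset α)) (X Y Z D : Finset α) : Prop where
  hXY : Disjoint X Y
  hXZ : Disjoint X Z
  hYZ : Disjoint Y Z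
  hXD : Disjoint X D
  hYD : Disjoint Y D
  hZD : Disjoint Z D
  hu : X ∪ Y ∪ Z ∪ D = S
  cX : X.card = 6
  cY : Y.card = 6
  cZ : Z.card = 6
  cD : D.card = 3
  hP : FlowerPetals Bl D X Y Z

variable {S : Finset α} {Bl : Finset (Finset α)} {X Y Z D : Finset α}

theorem Flower.swap (hF : Flower S Bl X Y Z D) : Flower S Bl X Z Y D where
  hXY := hF.hXZ
  hXZ := hF.hXY
  hYZ := hF.hYZ.symm
  hXD := hF.hXD
  hYD := hF.hZD
  hZD := hF.hYD
  hu := by rw [← hF.hu]; ext x; simp only [Finset.mem_union]; tauto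
  cX := hF.cX
  cY := hF.cZ
  cZ := hF.cY
  cD := hF.cD
  hP := ⟨hF.hP.1, hF.hP.2.2, hF.hP.2.1⟩

theorem flower_of_isFlower {A B C : Finset α} (hf : IsFlower S Bl A B C D) :
    ∃ X Y Z, Flower S Bl X Y Z D ∧ (X = A ∨ X = B ∨ X = C) ∧ (Y = A ∨ Y = B ∨ Y = C) ∧
      (Z = A ∨ Z = B ∨ Z = C) ∧ ({X, Y, Z, D} : Set (Finset α)) = {A, B, C, D} := by
  obtain ⟨hu, cA, cB, cC, cD, dAB, dAC, dAD, dBC, dBD, dCD, hP⟩ := hf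
  rcases hP with hP | hP | hP
  · exact ⟨A, B, C, ⟨dAB, dAC, dBC, dAD, dBD, dCD, hu, cA, cB, cC, cD, hP⟩,
      Or.inl rfl, Or.inr (Or.inl rfl), Or.inr (Or.inr rfl), rfl⟩
  · refine ⟨B, A, C, ⟨dAB.symm, dBC, dAC, dBD, dAD, dCD, ?_, cB, cA, cC, cD, hP⟩,
      Or.inr (Or.inl rfl), Or.inl rfl, Or.inr (Or.inr rfl), ?_⟩
    · rw [← hu]; ext x; simp only [Finset.mem_union]; tauto
    · ext x; simp only [Set.mem_insert_iff, Set.mem_singleton_iff]; tauto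
  · refine ⟨C, A, B, ⟨dAC.symm, dBC.symm, dAB, dCD, dAD, dBD, ?_, cC, cA, cB, cD, hP⟩,
      Or.inr (Or.inr rfl), Or.inl rfl, Or.inr (Or.inl rfl), ?_⟩
    · rw [← hu]; ext x; simp only [Finset.mem_union]; tauto
    · ext x; simp only [Set.mem_insert_iff, Set.mem_singleton_iff]; tauto

namespace Flower

variable (hF : Flower S Bl X Y Z D)
include hF

theorem subX : X ⊆ S := by rw [← hF.hu]; intro x hx; simp [Finset.mem_union, hx]
theorem subY : Y ⊆ S := by rw [← hF.hu]; intro x hx; simp [Finset.mem_union, hx]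
theorem subZ : Z ⊆ S := by rw [← hF.hu]; intro x hx; simp [Finset.mem_union, hx]
theorem subD : D ⊆ S := by rw [← hF.hu]; intro x hx; simp [Finset.mem_union, hx]

theorem mem_parts {x : α} (hx : x ∈ S) : x ∈ X ∨ x ∈ Y ∨ x ∈ Z ∨ x ∈ D := by
  rw [← hF.hu] at hx; simpa only [Finset.mem_union, or_assoc] using hx

/-- the block through a pair of a 9-set of the flower, not both points in the stem,
stays in the 9-set -/
theorem closure (hS : IsSTS S Bl) {P : Finset α} (hpet : P = X ∨ P = Y ∨ P = Z)
    {p q : α} (hp : p ∈ P ∪ D) (hq : q ∈ P ∪ D) (hpq : p ≠ q) (hD : ¬(p ∈ D ∧ q ∈ D)) :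
    blk Bl p q ⊆ P ∪ D := by
  have hPS : P ∪ D ⊆ S := by
    rcases hpet with rfl | rfl | rfl
    · exact Finset.union_subset hF.subX hF.subD
    · exact Finset.union_subset hF.subY hF.subD
    · exact Finset.union_subset hF.subZ hF.subD
  have hpS := hPS hp; have hqS := hPS hq
  rcases hpet with rfl | rfl | rfl
  · obtain ⟨C0, hC0Bl, hC0⟩ := hF.hP.1
    obtain ⟨b, ⟨hbC0, hpb, hqb⟩, -⟩ := hC0.2 p hp q hq hpq
    rw [← blk_unique hS hpS hqS hpq (hC0Bl hbC0) hpb hqb]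
    exact (hC0.1 b hbC0).1
  · obtain ⟨C1, hC1Bl, hDC1, hC1⟩ := hF.hP.2.1
    obtain ⟨b, ⟨hbC1, hpb, hqb⟩, -⟩ := hC1.2 p hp q hq hpq
    have hbC1' : b ∈ C1 := by
      rcases Finset.mem_insert.1 hbC1 with rfl | h
      · exact absurd ⟨hpb, hqb⟩ hD
      · exact h
    rw [← blk_unique hS hpS hqS hpq (hC1Bl hbC1') hpb hqb]
    exact (hC1.1 b hbC1).1
  · obtain ⟨C2, hC2Bl, hDC2, hC2⟩ := hF.hP.2.2
    obtain ⟨b, ⟨hbC2, hpb, hqb⟩, -⟩ := hC2.2 p hp q hq hpq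
    have hbC2' : b ∈ C2 := by
      rcases Finset.mem_insert.1 hbC2 with rfl | h
      · exact absurd ⟨hpb, hqb⟩ hD
      · exact h
    rw [← blk_unique hS hpS hqS hpq (hC2Bl hbC2') hpb hqb]
    exact (hC2.1 b hbC2).1

/-- the block through a pair of the stem stays in the full 9-set -/
theorem closureD (hS : IsSTS S Bl) {p q : α} (hp : p ∈ D) (hq : q ∈ D) (hpq : p ≠ q) :
    blk Bl p q ⊆ X ∪ D := by
  have hpS := hF.subD hp; have hqS := hF.subD hq
  obtain ⟨C0, hC0Bl, hC0⟩ := hF.hP.1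
  have hp' : p ∈ X ∪ D := Finset.mem_union_right _ hp
  have hq' : q ∈ X ∪ D := Finset.mem_union_right _ hq
  obtain ⟨b, ⟨hbC0, hpb, hqb⟩, -⟩ := hC0.2 p hp' q hq' hpq
  rw [← blk_unique hS hpS hqS hpq (hC0Bl hbC0) hpb hqb]
  exact (hC0.1 b hbC0).1

/-- blocks through pairs of the full 9-set stay inside: it is closed -/
theorem closedW (hS : IsSTS S Bl) {p q : α} (hp : p ∈ X ∪ D) (hq : q ∈ X ∪ D) (hpq : p ≠ q) :
    blk Bl p q ⊆ X ∪ D := by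
  by_cases hD : p ∈ D ∧ q ∈ D
  · exact hF.closureD hS hD.1 hD.2 hpq
  · exact hF.closure hS (Or.inl rfl) hp hq hpq hD

end Flower

end TwoFlowersAux
namespace TwoFlowersAux
set_option linter.unusedSectionVars false

variable {α : Type*} [DecidableEq α]
variable {S : Finset α} {Bl : Finset (Finset α)} {X Y Z D : Finset α}

namespace Flower

variable (hF : Flower S Bl X Y Z D)
include hF

theorem petal_sub {P : Finset α} (hpet : P = X ∨ P = Y ∨ P = Z) : P ⊆ S := by
  rcases hpet with rfl | rfl | rfl
  exacts [hF.subX, hF.subY, hF.subZ]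

theorem petal_disjD {P : Finset α} (hpet : P = X ∨ P = Y ∨ P = Z) : Disjoint P D := by
  rcases hpet with rfl | rfl | rfl
  exacts [hF.hXD, hF.hYD, hF.hZD]

theorem petal_disj {P Q : Finset α} (hpet : P = X ∨ P = Y ∨ P = Z)
    (hqet : Q = X ∨ Q = Y ∨ Q = Z) (hPQ : P ≠ Q) : Disjoint P Q := by
  rcases hpet with rfl | rfl | rfl <;> rcases hqet with rfl | rfl | rfl
  exacts [absurd rfl hPQ, hF.hXY, hF.hXZ, hF.hXY.symm, absurd rfl hPQ, hF.hYZ,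
    hF.hXZ.symm, hF.hYZ.symm, absurd rfl hPQ]

/-- the stem-to-almost-petal matching: the third point of a block through a stem point
and an almost-petal point is in the same almost petal -/
theorem trd_petal (hS : IsSTS S Bl) {P : Finset α} (hpet : P = Y ∨ P = Z)
    {d p : α} (hd : d ∈ D) (hp : p ∈ P) : trd Bl d p ∈ P := by
  have hpet' : P = X ∨ P = Y ∨ P = Z := Or.inr hpet
  have hpD : p ∉ D := Finset.disjoint_left.1 (hF.petal_disjD hpet') hp
  have hdp : d ≠ p := fun h => hpD (h ▸ hd)
  have hdS : d ∈ S := hF.subD hd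
  have hpS : p ∈ S := hF.petal_sub hpet' hp
  have hsub : blk Bl d p ⊆ P ∪ D :=
    hF.closure hS hpet' (Finset.mem_union_right _ hd) (Finset.mem_union_left _ hp) hdp
      (fun h => hpD h.2)
  have hr : trd Bl d p ∈ P ∪ D := hsub (trd_mem_blk hS hdS hpS hdp)
  rcases Finset.mem_union.1 hr with h | h
  · exact h
  · exfalso
    have hrd : trd Bl d p ≠ d := trd_ne_left hS hdS hpS hdp
    have hrS : trd Bl d p ∈ S := trd_mem_S hS hdS hpS hdp
    have heq : blk Bl d (trd Bl d p) = blk Bl d p :=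
      blk_eq_blk hS hdS hpS hrS hdp hrd.symm (trd_mem_blk hS hdS hpS hdp)
    have hXD : blk Bl d (trd Bl d p) ⊆ X ∪ D := hF.closureD hS hd h hrd.symm
    have : p ∈ X ∪ D := hXD (heq ▸ mem_blk_right hS hdS hpS hdp)
    rcases Finset.mem_union.1 this with h' | h'
    · rcases hpet with rfl | rfl
      · exact Finset.disjoint_left.1 hF.hXY h' hp
      · exact Finset.disjoint_left.1 hF.hXZ h' hp
    · exact hpD h'

/-- blocks through points of distinct petals avoid the stem and both petals -/
theorem trd_cross (hS : IsSTS S Bl) {P Q : Finset α} (hpet : P = X ∨ P = Y ∨ P = Z)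
    (hqet : Q = X ∨ Q = Y ∨ Q = Z) (hPQ : P ≠ Q) {p q : α} (hp : p ∈ P) (hq : q ∈ Q) :
    (trd Bl p q ∈ X ∪ Y ∪ Z) ∧ trd Bl p q ∉ P ∧ trd Bl p q ∉ Q ∧ trd Bl p q ∉ D := by
  have hdisj := hF.petal_disj hpet hqet hPQ
  have hpq : p ≠ q := fun h => Finset.disjoint_left.1 hdisj hp (h ▸ hq)
  have hpS : p ∈ S := hF.petal_sub hpet hp
  have hqS : q ∈ S := hF.petal_sub hqet hq
  have hpD : p ∉ D := Finset.disjoint_left.1 (hF.petal_disjD hpet) hp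
  have hqD : q ∉ D := Finset.disjoint_left.1 (hF.petal_disjD hqet) hq
  set r := trd Bl p q with hrdef
  have hrS : r ∈ S := trd_mem_S hS hpS hqS hpq
  have hrp : r ≠ p := trd_ne_left hS hpS hqS hpq
  have hrq : r ≠ q := trd_ne_right hS hpS hqS hpq
  have hrb : r ∈ blk Bl p q := trd_mem_blk hS hpS hqS hpq
  have key : r ∈ P ∪ D → False := by
    intro hrT
    have heq : blk Bl p r = blk Bl p q := blk_eq_blk hS hpS hqS hrS hpq hrp.symm hrb
    have hsub : blk Bl p r ⊆ P ∪ D := hF.closure hS hpet (Finset.mem_union_left _ hp) hrT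
      hrp.symm (fun h => hpD h.1)
    have hqT : q ∈ P ∪ D := hsub (heq ▸ mem_blk_right hS hpS hqS hpq)
    rcases Finset.mem_union.1 hqT with h' | h'
    · exact Finset.disjoint_right.1 hdisj hq h'
    · exact hqD h'
  have hrD : r ∉ D := fun hrD => key (Finset.mem_union_right _ hrD)
  refine ⟨?_, ?_, ?_, hrD⟩
  · have := hF.mem_parts hrS
    rcases this with h | h | h | h
    · exact Finset.mem_union_left _ (Finset.mem_union_left _ h)
    · exact Finset.mem_union_left _ (Finset.mem_union_right _ h)
    · exact Finset.mem_union_right _ h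
    · exact absurd h hrD
  · intro hrP
    exact key (Finset.mem_union_left _ hrP)
  · intro hrQ
    -- symmetric: use pair (q, r)
    have heq : blk Bl q r = blk Bl p q := by
      have h1 : blk Bl q r = blk Bl q p := blk_eq_blk hS hqS hpS hrS hpq.symm hrq.symm
        (by rw [← blk_comm hS hpS hqS hpq]; exact hrb)
      rw [h1, blk_comm hS hqS hpS hpq.symm]
    have hsub : blk Bl q r ⊆ Q ∪ D := hF.closure hS hqet (Finset.mem_union_left _ hq)
      (Finset.mem_union_left _ hrQ) hrq.symm (fun h => hqD h.1)
    have hpQ : p ∈ Q ∪ D := hsub (heq ▸ mem_blk_left hS hpS hqS hpq)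
    rcases Finset.mem_union.1 hpQ with h' | h'
    · exact Finset.disjoint_left.1 hdisj hp h'
    · exact hpD h'

theorem trd_third (hS : IsSTS S Bl) {P Q R : Finset α} (hpet : P = X ∨ P = Y ∨ P = Z)
    (hqet : Q = X ∨ Q = Y ∨ Q = Z) (hret : R = X ∨ R = Y ∨ R = Z)
    (hPQ : P ≠ Q) (hPR : P ≠ R) (hQR : Q ≠ R) {p q : α} (hp : p ∈ P) (hq : q ∈ Q) :
    trd Bl p q ∈ R := by
  obtain ⟨hmem, hnP, hnQ, hnD⟩ := hF.trd_cross hS hpet hqet hPQ hp hq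
  rcases hpet with rfl | rfl | rfl <;> rcases hqet with rfl | rfl | rfl <;>
    rcases hret with rfl | rfl | rfl <;>
    first
    | exact absurd rfl hPQ
    | exact absurd rfl hPR
    | exact absurd rfl hQR
    | (simp only [Finset.mem_union] at hmem; tauto)

end Flower

section Tools

theorem even_inter_of_matching (hS : IsSTS S Bl) {A : Finset α} {d : α} (hd : d ∈ S)
    (hdA : d ∉ A) (hAS : A ⊆ S) (hmaps : ∀ p ∈ A, trd Bl d p ∈ A) : Even A.card := by
  apply even_card_of_fpf A (fun p => trd Bl d p) hmaps
  · intro p hp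
    exact trd_invol hS hd (hAS hp) (fun h => hdA (h ▸ hp))
  · intro p hp
    exact trd_ne_right hS hd (hAS hp) (fun h => hdA (h ▸ hp))

theorem card_le_of_pivot (hS : IsSTS S Bl) {A B2 : Finset α} {y : α} (hy : y ∈ S)
    (hAS : A ⊆ S) (hyA : y ∉ A) (hmaps : ∀ p ∈ A, trd Bl p y ∈ B2) : A.card ≤ B2.card := by
  apply Finset.card_le_card_of_injOn (fun p => trd Bl p y) hmaps
  intro p hp p' hp' heq
  have hpS : p ∈ S := hAS hp
  have hp'S : p' ∈ S := hAS hp'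
  have hpy : p ≠ y := fun h => hyA (h ▸ hp)
  have hp'y : p' ≠ y := fun h => hyA (h ▸ hp')
  simp only at heq
  set r := trd Bl p y with hr
  have hrS : r ∈ S := trd_mem_S hS hpS hy hpy
  have hry : r ≠ y := trd_ne_right hS hpS hy hpy
  have key : ∀ u : α, u ∈ S → u ≠ y → trd Bl u y = r → u = trd Bl y r := by
    intro u hu huy htu
    have hub : r ∈ blk Bl u y := htu ▸ trd_mem_blk hS hu hy huy
    have hblk : blk Bl u y = blk Bl y r :=
      blk_unique hS hy hrS hry.symm (blk_mem hS hu hy huy) (mem_blk_right hS hu hy huy) hub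
    apply eq_trd hS hy hrS hry.symm
    · rw [← hblk]; exact mem_blk_left hS hu hy huy
    · exact huy
    · intro h; exact (trd_ne_left hS hu hy huy) (htu.trans h.symm)
  rw [key p hpS hpy rfl, key p' hp'S hp'y heq.symm]

theorem no_double_match (hS : IsSTS S Bl) {d1 d2 y1 : α} (hd1 : d1 ∈ S) (hd2 : d2 ∈ S)
    (hy1 : y1 ∈ S) (hd12 : d1 ≠ d2) (h1y : d1 ≠ y1) (h2y : d2 ≠ y1)
    (heq : trd Bl d1 y1 = trd Bl d2 y1) : False := by
  set y2 := trd Bl d1 y1 with hy2def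
  have hy2S : y2 ∈ S := trd_mem_S hS hd1 hy1 h1y
  have h12 : y1 ≠ y2 := (trd_ne_right hS hd1 hy1 h1y).symm
  have key : ∀ u : α, u ∈ S → u ≠ y1 → trd Bl u y1 = y2 → u = trd Bl y1 y2 := by
    intro u hu huy htu
    have hub : y2 ∈ blk Bl u y1 := htu ▸ trd_mem_blk hS hu hy1 huy
    have hblk : blk Bl u y1 = blk Bl y1 y2 :=
      blk_unique hS hy1 hy2S h12 (blk_mem hS hu hy1 huy) (mem_blk_right hS hu hy1 huy) hub
    apply eq_trd hS hy1 hy2S h12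
    · rw [← hblk]; exact mem_blk_left hS hu hy1 huy
    · exact huy
    · intro h; exact (trd_ne_left hS hu hy1 huy) (htu.trans h.symm)
  have e1 := key d1 hd1 h1y rfl
  have e2 := key d2 hd2 h2y heq.symm
  exact hd12 (e1.trans e2.symm)

theorem parts_card (hF : Flower S Bl X Y Z D) {V : Finset α} (hV : V ⊆ S) :
    (V ∩ X).card + (V ∩ Y).card + (V ∩ Z).card + (V ∩ D).card = V.card := by
  have hdXY : Disjoint (V ∩ X) (V ∩ Y) := hF.hXY.mono Finset.inter_subset_right Finset.inter_subset_right
  have hdXZ : Disjoint (V ∩ X) (V ∩ Z) := hF.hXZ.mono Finset.inter_subset_right Finset.inter_subset_right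
  have hdYZ : Disjoint (V ∩ Y) (V ∩ Z) := hF.hYZ.mono Finset.inter_subset_right Finset.inter_subset_right
  have hdXD : Disjoint (V ∩ X) (V ∩ D) := hF.hXD.mono Finset.inter_subset_right Finset.inter_subset_right
  have hdYD : Disjoint (V ∩ Y) (V ∩ D) := hF.hYD.mono Finset.inter_subset_right Finset.inter_subset_right
  have hdZD : Disjoint (V ∩ Z) (V ∩ D) := hF.hZD.mono Finset.inter_subset_right Finset.inter_subset_right
  have hV' : V = ((V ∩ X) ∪ (V ∩ Y)) ∪ ((V ∩ Z) ∪ (V ∩ D)) := by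
    ext x
    simp only [Finset.mem_union, Finset.mem_inter]
    constructor
    · intro hx
      rcases hF.mem_parts (hV hx) with h | h | h | h <;> tauto
    · tauto
  conv_rhs => rw [hV']
  rw [Finset.card_union_of_disjoint, Finset.card_union_of_disjoint hdXY,
    Finset.card_union_of_disjoint hdZD]
  · ring
  · rw [Finset.disjoint_union_left, Finset.disjoint_union_right, Finset.disjoint_union_right]
    exact ⟨⟨hdXZ, hdXD⟩, hdYZ, hdYD⟩

end Tools

end TwoFlowersAux
namespace TwoFlowersAux
set_option linter.unusedSectionVars false
set_option maxHeartbeats 1000000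

variable {α : Type*} [DecidableEq α]
variable {S : Finset α} {Bl : Finset (Finset α)} {X Y Z D X' Y' Z' D' : Finset α}

theorem ne_of_disjoint_card {P Q : Finset α} (hdisj : Disjoint P Q) (hP : P.card = 6) :
    P ≠ Q := by
  intro h
  subst h
  have : P = ⊥ := disjoint_self.1 hdisj
  rw [Finset.bot_eq_empty] at this
  rw [this] at hP
  simp at hP

theorem Flower.neXY (hF : Flower S Bl X Y Z D) : X ≠ Y := ne_of_disjoint_card hF.hXY hF.cX
theorem Flower.neXZ (hF : Flower S Bl X Y Z D) : X ≠ Z := ne_of_disjoint_card hF.hXZ hF.cX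
theorem Flower.neYZ (hF : Flower S Bl X Y Z D) : Y ≠ Z := ne_of_disjoint_card hF.hYZ hF.cY

/-- Step A: a closed 9-set `X ∪ D` (the full petal 9-set of flower `F`) interacts with
another flower `F'` in one of two ways. -/
theorem stepA (hS : IsSTS S Bl) (hF : Flower S Bl X Y Z D) (hF' : Flower S Bl X' Y' Z' D') :
    ((X ∪ D) ∩ D' = ∅ ∧ ((X ∪ D) ∩ X').card = 3 ∧ ((X ∪ D) ∩ Y').card = 3 ∧
      ((X ∪ D) ∩ Z').card = 3) ∨
    (∃ E', (E' = X' ∨ E' = Y' ∨ E' = Z') ∧ X ∪ D = E' ∪ D') := by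
  classical
  set W := X ∪ D with hW
  have hWS : W ⊆ S := Finset.union_subset hF.subX hF.subD
  have hWcard : W.card = 9 := by
    rw [hW, Finset.card_union_of_disjoint hF.hXD, hF.cX, hF.cD]
  have hclosed : ∀ p ∈ W, ∀ q ∈ W, p ≠ q → blk Bl p q ⊆ W := fun p hp q hq hpq =>
    hF.closedW hS hp hq hpq
  have hsum : (W ∩ X').card + (W ∩ Y').card + (W ∩ Z').card + (W ∩ D').card = 9 := by
    rw [parts_card hF' hWS, hWcard]
  have ha6 : (W ∩ X').card ≤ 6 := hF'.cX ▸ Finset.card_le_card Finset.inter_subset_right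
  have hb6 : (W ∩ Y').card ≤ 6 := hF'.cY ▸ Finset.card_le_card Finset.inter_subset_right
  have hc6 : (W ∩ Z').card ≤ 6 := hF'.cZ ▸ Finset.card_le_card Finset.inter_subset_right
  have ht3 : (W ∩ D').card ≤ 3 := hF'.cD ▸ Finset.card_le_card Finset.inter_subset_right
  -- matching: third point through a stem point of F' and a point in an almost F'-petal
  have hmatchYZ : ∀ d' ∈ W ∩ D', ∀ P' : Finset α, (P' = Y' ∨ P' = Z') →
      ∀ p ∈ W ∩ P', trd Bl d' p ∈ W ∩ P' := by
    intro d' hd' P' hpet p hp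
    have hd'D : d' ∈ D' := (Finset.mem_inter.1 hd').2
    have hpP : p ∈ P' := (Finset.mem_inter.1 hp).2
    have hne : d' ≠ p := fun h => Finset.disjoint_right.1
      (hF'.petal_disjD (Or.inr hpet)) hd'D (h ▸ hpP)
    refine Finset.mem_inter.2 ⟨?_, hF'.trd_petal hS hpet hd'D hpP⟩
    exact hclosed d' (Finset.mem_inter.1 hd').1 p (Finset.mem_inter.1 hp).1 hne
      (trd_mem_blk hS (hWS (Finset.mem_inter.1 hd').1) (hWS (Finset.mem_inter.1 hp).1) hne)
  have hevenYZ : ∀ d' ∈ W ∩ D', ∀ P' : Finset α, (P' = Y' ∨ P' = Z') →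
      Even ((W ∩ P').card) := by
    intro d' hd' P' hpet
    have hd'D : d' ∈ D' := (Finset.mem_inter.1 hd').2
    apply even_inter_of_matching hS (hWS (Finset.mem_inter.1 hd').1)
      (fun h => Finset.disjoint_right.1 (hF'.petal_disjD (Or.inr hpet)) hd'D
        (Finset.mem_inter.1 h).2)
      ((Finset.inter_subset_left).trans hWS)
    exact hmatchYZ d' hd' P' hpet
  -- cross-petal injections
  have hinj : ∀ P' Q' R' : Finset α, (P' = X' ∨ P' = Y' ∨ P' = Z') →
      (Q' = X' ∨ Q' = Y' ∨ Q' = Z') → (R' = X' ∨ R' = Y' ∨ R' = Z') →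
      P' ≠ Q' → P' ≠ R' → Q' ≠ R' → (W ∩ Q').Nonempty →
      (W ∩ P').card ≤ (W ∩ R').card := by
    intro P' Q' R' hp hq hr hPQ hPR hQR ⟨y, hy⟩
    have hyQ : y ∈ Q' := (Finset.mem_inter.1 hy).2
    apply card_le_of_pivot hS (hWS (Finset.mem_inter.1 hy).1)
      ((Finset.inter_subset_left).trans hWS)
      (fun h => Finset.disjoint_left.1 (hF'.petal_disj hp hq hPQ)
        (Finset.mem_inter.1 h).2 hyQ)
    intro p hp'
    have hpP : p ∈ P' := (Finset.mem_inter.1 hp').2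
    have hne : p ≠ y := fun h => Finset.disjoint_left.1 (hF'.petal_disj hp hq hPQ) hpP (h ▸ hyQ)
    refine Finset.mem_inter.2 ⟨?_, hF'.trd_third hS hp hq hr hPQ hPR hQR hpP hyQ⟩
    exact hclosed p (Finset.mem_inter.1 hp').1 y (Finset.mem_inter.1 hy).1 hne
      (trd_mem_blk hS (hWS (Finset.mem_inter.1 hp').1) (hWS (Finset.mem_inter.1 hy).1) hne)
  have hX'Y' := hF'.neXY
  have hX'Z' := hF'.neXZ
  have hY'Z' := hF'.neYZ
  -- derived equalities
  have eqA : (W ∩ X').Nonempty → (W ∩ Y').card = (W ∩ Z').card := fun h =>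
    le_antisymm (hinj Y' X' Z' (by tauto) (by tauto) (by tauto) hX'Y'.symm hY'Z' hX'Z' h)
      (hinj Z' X' Y' (by tauto) (by tauto) (by tauto) hX'Z'.symm hY'Z'.symm hX'Y' h)
  have eqB : (W ∩ Y').Nonempty → (W ∩ X').card = (W ∩ Z').card := fun h =>
    le_antisymm (hinj X' Y' Z' (by tauto) (by tauto) (by tauto) hX'Y' hX'Z' hY'Z' h)
      (hinj Z' Y' X' (by tauto) (by tauto) (by tauto) hY'Z'.symm hX'Z'.symm hX'Y'.symm h)
  have eqC : (W ∩ Z').Nonempty → (W ∩ X').card = (W ∩ Y').card := fun h =>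
    le_antisymm (hinj X' Z' Y' (by tauto) (by tauto) (by tauto) hX'Z' hX'Y' hY'Z'.symm h)
      (hinj Y' Z' X' (by tauto) (by tauto) (by tauto) hY'Z' hX'Y'.symm hX'Z'.symm h)
  -- the "T3" trick: impossible to have exactly 2 points in an almost petal with 2 stem pts
  have hT3 : ∀ P' : Finset α, (P' = Y' ∨ P' = Z') → (W ∩ P').card = 2 →
      2 ≤ (W ∩ D').card → False := by
    intro P' hpet hb2 ht2
    obtain ⟨d1, hd1, d2, hd2, hd12⟩ := Finset.one_lt_card.1 (show 1 < (W ∩ D').card by omega)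
    obtain ⟨y1, hy1⟩ : (W ∩ P').Nonempty := Finset.card_pos.1 (by omega)
    have h1 := hmatchYZ d1 hd1 P' hpet y1 hy1
    have h2 := hmatchYZ d2 hd2 P' hpet y1 hy1
    have hd1S : d1 ∈ S := hWS (Finset.mem_inter.1 hd1).1
    have hd2S : d2 ∈ S := hWS (Finset.mem_inter.1 hd2).1
    have hy1S : y1 ∈ S := hWS (Finset.mem_inter.1 hy1).1
    have hd1y : d1 ≠ y1 := fun h => Finset.disjoint_right.1 (hF'.petal_disjD (Or.inr hpet))
      (Finset.mem_inter.1 hd1).2 (h ▸ (Finset.mem_inter.1 hy1).2)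
    have hd2y : d2 ≠ y1 := fun h => Finset.disjoint_right.1 (hF'.petal_disjD (Or.inr hpet))
      (Finset.mem_inter.1 hd2).2 (h ▸ (Finset.mem_inter.1 hy1).2)
    have he : ((W ∩ P').erase y1).card = 1 := by
      rw [Finset.card_erase_of_mem hy1, hb2]
    obtain ⟨w, hw⟩ := Finset.card_eq_one.1 he
    have m1 : trd Bl d1 y1 ∈ (W ∩ P').erase y1 :=
      Finset.mem_erase.2 ⟨trd_ne_right hS hd1S hy1S hd1y, h1⟩
    have m2 : trd Bl d2 y1 ∈ (W ∩ P').erase y1 :=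
      Finset.mem_erase.2 ⟨trd_ne_right hS hd2S hy1S hd2y, h2⟩
    rw [hw, Finset.mem_singleton] at m1 m2
    exact no_double_match hS hd1S hd2S hy1S hd12 hd1y hd2y (m1.trans m2.symm)
  -- helper to produce the right-hand outcome
  have hfull : ∀ P' : Finset α, (P' = X' ∨ P' = Y' ∨ P' = Z') → (W ∩ P').card = 6 →
      (W ∩ D').card = 3 → W = P' ∪ D' := by
    intro P' hpet h6 h3
    have hP'card : P'.card = 6 := by rcases hpet with rfl | rfl | rfl
                                     exacts [hF'.cX, hF'.cY, hF'.cZ]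
    have h1 : W ∩ P' = P' := Finset.eq_of_subset_of_card_le Finset.inter_subset_right
      (by rw [h6, hP'card])
    have h2 : W ∩ D' = D' := Finset.eq_of_subset_of_card_le Finset.inter_subset_right
      (by rw [h3, hF'.cD])
    have hsub : P' ∪ D' ⊆ W := Finset.union_subset
      (h1 ▸ Finset.inter_subset_left) (h2 ▸ Finset.inter_subset_left)
    refine (Finset.eq_of_subset_of_card_le hsub ?_).symm
    rw [Finset.card_union_of_disjoint (hF'.petal_disjD hpet), hWcard, hP'card, hF'.cD]
  -- main case analysis on t := (W ∩ D').card
  have htcases : (W ∩ D').card = 0 ∨ (W ∩ D').card = 1 ∨ (W ∩ D').card = 2 ∨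
      (W ∩ D').card = 3 := by omega
  have hnonA : ∀ n, (W ∩ X').card = n → 0 < n → (W ∩ X').Nonempty := fun n h hp =>
    Finset.card_pos.1 (h ▸ hp)
  rcases htcases with ht | ht | ht | ht
  · -- t = 0
    left
    have hD'empty : W ∩ D' = ∅ := Finset.card_eq_zero.1 ht
    refine ⟨hD'empty, ?_⟩
    rcases Nat.eq_zero_or_pos (W ∩ X').card with ha | ha <;>
      rcases Nat.eq_zero_or_pos (W ∩ Y').card with hb | hb <;>
      rcases Nat.eq_zero_or_pos (W ∩ Z').card with hc | hc
    · omega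
    · omega
    · omega
    · have := eqB (Finset.card_pos.1 hb); omega
    · omega
    · have := eqC (Finset.card_pos.1 hc); omega
    · have := eqA (Finset.card_pos.1 ha); omega
    · have h1 := eqA (Finset.card_pos.1 ha)
      have h2 := eqB (Finset.card_pos.1 hb)
      omega
  · -- t = 1 : impossible
    exfalso
    rcases Nat.eq_zero_or_pos (W ∩ X').card with ha | ha <;>
      rcases Nat.eq_zero_or_pos (W ∩ Y').card with hb | hb <;>
      rcases Nat.eq_zero_or_pos (W ∩ Z').card with hc | hc
    · omega
    · omega
    · omega
    · have := eqB (Finset.card_pos.1 hb); omega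
    · omega
    · have := eqC (Finset.card_pos.1 hc); omega
    · have := eqA (Finset.card_pos.1 ha); omega
    · have h1 := eqA (Finset.card_pos.1 ha)
      have h2 := eqB (Finset.card_pos.1 hb)
      omega
  · -- t = 2 : impossible
    exfalso
    obtain ⟨d', hd'⟩ : (W ∩ D').Nonempty := Finset.card_pos.1 (by omega)
    have hbe := hevenYZ d' hd' Y' (Or.inl rfl)
    have hce := hevenYZ d' hd' Z' (Or.inr rfl)
    rw [Nat.even_iff] at hbe hce
    rcases Nat.eq_zero_or_pos (W ∩ X').card with ha | ha
    · rcases Nat.eq_zero_or_pos (W ∩ Y').card with hb | hb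
      · omega
      · rcases Nat.eq_zero_or_pos (W ∩ Z').card with hc | hc
        · omega
        · have := eqB (Finset.card_pos.1 hb); omega
    · have heq := eqA (Finset.card_pos.1 ha)
      -- b = c, both even, a = 7 - 2b ≥ 1 so b ≤ 2, and b = 0 gives a = 7 > 6
      have hb2 : (W ∩ Y').card = 2 := by omega
      exact hT3 Y' (Or.inl rfl) hb2 (by omega)
  · -- t = 3
    obtain ⟨d', hd'⟩ : (W ∩ D').Nonempty := Finset.card_pos.1 (by omega)
    have hbe := hevenYZ d' hd' Y' (Or.inl rfl)
    have hce := hevenYZ d' hd' Z' (Or.inr rfl)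
    rw [Nat.even_iff] at hbe hce
    rcases Nat.eq_zero_or_pos (W ∩ X').card with ha | ha
    · rcases Nat.eq_zero_or_pos (W ∩ Y').card with hb | hb
      · -- a = 0, b = 0 → c = 6
        right
        exact ⟨Z', Or.inr (Or.inr rfl), hfull Z' (Or.inr (Or.inr rfl)) (by omega) ht⟩
      · rcases Nat.eq_zero_or_pos (W ∩ Z').card with hc | hc
        · right
          exact ⟨Y', Or.inr (Or.inl rfl), hfull Y' (Or.inr (Or.inl rfl)) (by omega) ht⟩
        · have := eqB (Finset.card_pos.1 hb); omega
    · have heq := eqA (Finset.card_pos.1 ha)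
      rcases Nat.eq_zero_or_pos (W ∩ Y').card with hb | hb
      · -- b = c = 0, a = 6
        right
        exact ⟨X', Or.inl rfl, hfull X' (Or.inl rfl) (by omega) ht⟩
      · -- a = b = c = 2 (from a > 0, b > 0: a = c and b = c so all equal, sum 6)
        have heq2 := eqB (Finset.card_pos.1 hb)
        have hb2 : (W ∩ Y').card = 2 := by omega
        exact absurd (hT3 Y' (Or.inl rfl) hb2 (by omega)) (by tauto)

end TwoFlowersAux
namespace TwoFlowersAux
set_option linter.unusedSectionVars false
set_option maxHeartbeats 1000000

variable {α : Type*} [DecidableEq α]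
variable {S : Finset α} {Bl : Finset (Finset α)} {X Y Z D X' Y' Z' D' : Finset α}

/-- If two flowers have the same stem, every almost petal of the first is a petal
of the second. -/
theorem petal_match (hS : IsSTS S Bl) (hF : Flower S Bl X Y Z D)
    (hF' : Flower S Bl X' Y' Z' D') (hDD : D = D') {P : Finset α}
    (hpet : P = Y ∨ P = Z) : P = X' ∨ P = Y' ∨ P = Z' := by
  classical
  have hpet' : P = X ∨ P = Y ∨ P = Z := Or.inr hpet
  have hPcard : P.card = 6 := by rcases hpet with rfl | rfl; exacts [hF.cY, hF.cZ]
  have hPD : Disjoint P D := hF.petal_disjD hpet'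
  have hPD' : Disjoint P D' := hDD ▸ hPD
  set V := P ∪ D with hV
  have hVS : V ⊆ S := Finset.union_subset (hF.petal_sub hpet') hF.subD
  have hVcard : V.card = 9 := by
    rw [hV, Finset.card_union_of_disjoint hPD, hPcard, hF.cD]
  have hinterD : V ∩ D' = D := by
    rw [← hDD]
    ext x
    simp only [Finset.mem_inter, hV, Finset.mem_union]
    constructor
    · exact fun h => h.2
    · exact fun h => ⟨Or.inr h, h⟩
  have hsum : (V ∩ X').card + (V ∩ Y').card + (V ∩ Z').card + 3 = 9 := by
    have := parts_card hF' hVS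
    rw [hVcard, hinterD, hF.cD] at this
    exact this
  have ha6 : (V ∩ X').card ≤ 6 := hF'.cX ▸ Finset.card_le_card Finset.inter_subset_right
  have hb6 : (V ∩ Y').card ≤ 6 := hF'.cY ▸ Finset.card_le_card Finset.inter_subset_right
  have hc6 : (V ∩ Z').card ≤ 6 := hF'.cZ ▸ Finset.card_le_card Finset.inter_subset_right
  -- points of V in an F'-petal are in P
  have hmemP : ∀ Q' : Finset α, (Q' = X' ∨ Q' = Y' ∨ Q' = Z') → ∀ p ∈ V ∩ Q', p ∈ P := by
    intro Q' hq p hp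
    have hpV := (Finset.mem_inter.1 hp).1
    have hpQ := (Finset.mem_inter.1 hp).2
    have hpD' : p ∉ D' := Finset.disjoint_left.1 (hF'.petal_disjD hq) hpQ
    rcases Finset.mem_union.1 hpV with h | h
    · exact h
    · exact absurd (hDD ▸ h) hpD'
  -- matching by stem points
  have hmatch : ∀ d ∈ D, ∀ Q' : Finset α, (Q' = X' ∨ Q' = Y' ∨ Q' = Z') →
      ∀ p ∈ V ∩ Q', trd Bl d p ∈ V ∩ Q' := by
    intro d hd Q' hq p hp
    have hpP : p ∈ P := hmemP Q' hq p hp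
    have hpQ := (Finset.mem_inter.1 hp).2
    have hdp : d ≠ p := fun h => Finset.disjoint_right.1 hPD hd (h ▸ hpP)
    have hdS : d ∈ S := hF.subD hd
    have hpS : p ∈ S := hVS (Finset.mem_inter.1 hp).1
    have htP : trd Bl d p ∈ P := hF.trd_petal hS hpet hd hpP
    have hdD' : d ∈ D' := hDD ▸ hd
    refine Finset.mem_inter.2 ⟨Finset.mem_union_left _ htP, ?_⟩
    rcases hq with rfl | hq'
    · -- Q' = X' : use closure of F' on X' ∪ D'
      have hsub : blk Bl d p ⊆ Q' ∪ D' := hF'.closure hS (Or.inl rfl)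
        (Finset.mem_union_right _ hdD') (Finset.mem_union_left _ hpQ) hdp
        (fun h => Finset.disjoint_left.1 (hF'.petal_disjD (Or.inl rfl)) hpQ h.2)
      have := hsub (trd_mem_blk hS hdS hpS hdp)
      rcases Finset.mem_union.1 this with h | h
      · exact h
      · exact absurd h (Finset.disjoint_left.1 hPD' htP)
    · exact hF'.trd_petal hS hq' hdD' hpQ
  -- all three intersection cardinalities are even
  have heven : ∀ Q' : Finset α, (Q' = X' ∨ Q' = Y' ∨ Q' = Z') → Even ((V ∩ Q').card) := by
    intro Q' hq
    obtain ⟨d, hd⟩ : D.Nonempty := Finset.card_pos.1 (by rw [hF.cD]; omega)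
    apply even_inter_of_matching hS (hF.subD hd)
      (fun h => Finset.disjoint_right.1 hPD hd (hmemP Q' hq d h))
      ((Finset.inter_subset_left).trans hVS)
    exact hmatch d hd Q' hq
  -- cross-petal injections
  have hinj : ∀ P' Q' R' : Finset α, (P' = X' ∨ P' = Y' ∨ P' = Z') →
      (Q' = X' ∨ Q' = Y' ∨ Q' = Z') → (R' = X' ∨ R' = Y' ∨ R' = Z') →
      P' ≠ Q' → P' ≠ R' → Q' ≠ R' → (V ∩ Q').Nonempty →
      (V ∩ P').card ≤ (V ∩ R').card := by
    intro P' Q' R' hp hq hr hPQ hPR hQR ⟨y, hy⟩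
    have hyQ : y ∈ Q' := (Finset.mem_inter.1 hy).2
    have hyP : y ∈ P := hmemP Q' hq y hy
    apply card_le_of_pivot hS (hVS (Finset.mem_inter.1 hy).1)
      ((Finset.inter_subset_left).trans hVS)
      (fun h => Finset.disjoint_left.1 (hF'.petal_disj hp hq hPQ)
        (Finset.mem_inter.1 h).2 hyQ)
    intro p hp'
    have hpP' : p ∈ P' := (Finset.mem_inter.1 hp').2
    have hpP : p ∈ P := hmemP P' hp p hp'
    have hne : p ≠ y := fun h => Finset.disjoint_left.1 (hF'.petal_disj hp hq hPQ) hpP'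
      (h ▸ hyQ)
    refine Finset.mem_inter.2 ⟨?_, hF'.trd_third hS hp hq hr hPQ hPR hQR hpP' hyQ⟩
    have hsub : blk Bl p y ⊆ V := hF.closure hS hpet' (Finset.mem_inter.1 hp').1
      (Finset.mem_inter.1 hy).1 hne
      (fun h => Finset.disjoint_left.1 hPD hpP h.1)
    exact hsub (trd_mem_blk hS (hVS (Finset.mem_inter.1 hp').1)
      (hVS (Finset.mem_inter.1 hy).1) hne)
  have hX'Y' := hF'.neXY
  have hX'Z' := hF'.neXZ
  have hY'Z' := hF'.neYZ
  have eqA : (V ∩ X').Nonempty → (V ∩ Y').card = (V ∩ Z').card := fun h =>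
    le_antisymm (hinj Y' X' Z' (by tauto) (by tauto) (by tauto) hX'Y'.symm hY'Z' hX'Z' h)
      (hinj Z' X' Y' (by tauto) (by tauto) (by tauto) hX'Z'.symm hY'Z'.symm hX'Y' h)
  have eqB : (V ∩ Y').Nonempty → (V ∩ X').card = (V ∩ Z').card := fun h =>
    le_antisymm (hinj X' Y' Z' (by tauto) (by tauto) (by tauto) hX'Y' hX'Z' hY'Z' h)
      (hinj Z' Y' X' (by tauto) (by tauto) (by tauto) hY'Z'.symm hX'Z'.symm hX'Y'.symm h)
  -- T3 trick
  have hT3 : ∀ Q' : Finset α, (Q' = X' ∨ Q' = Y' ∨ Q' = Z') → (V ∩ Q').card = 2 → False := by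
    intro Q' hq hb2
    obtain ⟨d1, hd1, d2, hd2, hd12⟩ := Finset.one_lt_card.1
      (show 1 < D.card by rw [hF.cD]; omega)
    obtain ⟨y1, hy1⟩ : (V ∩ Q').Nonempty := Finset.card_pos.1 (by omega)
    have h1 := hmatch d1 hd1 Q' hq y1 hy1
    have h2 := hmatch d2 hd2 Q' hq y1 hy1
    have hd1S : d1 ∈ S := hF.subD hd1
    have hd2S : d2 ∈ S := hF.subD hd2
    have hy1S : y1 ∈ S := hVS (Finset.mem_inter.1 hy1).1
    have hy1P : y1 ∈ P := hmemP Q' hq y1 hy1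
    have hd1y : d1 ≠ y1 := fun h => Finset.disjoint_right.1 hPD hd1 (h ▸ hy1P)
    have hd2y : d2 ≠ y1 := fun h => Finset.disjoint_right.1 hPD hd2 (h ▸ hy1P)
    have he : ((V ∩ Q').erase y1).card = 1 := by
      rw [Finset.card_erase_of_mem hy1, hb2]
    obtain ⟨w, hw⟩ := Finset.card_eq_one.1 he
    have m1 : trd Bl d1 y1 ∈ (V ∩ Q').erase y1 :=
      Finset.mem_erase.2 ⟨trd_ne_right hS hd1S hy1S hd1y, h1⟩
    have m2 : trd Bl d2 y1 ∈ (V ∩ Q').erase y1 :=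
      Finset.mem_erase.2 ⟨trd_ne_right hS hd2S hy1S hd2y, h2⟩
    rw [hw, Finset.mem_singleton] at m1 m2
    exact no_double_match hS hd1S hd2S hy1S hd12 hd1y hd2y (m1.trans m2.symm)
  -- from cardinality 6 to petal equality
  have hfull : ∀ Q' : Finset α, (Q' = X' ∨ Q' = Y' ∨ Q' = Z') → (V ∩ Q').card = 6 →
      P = Q' := by
    intro Q' hq h6
    have hQcard : Q'.card = 6 := by rcases hq with rfl | rfl | rfl
                                    exacts [hF'.cX, hF'.cY, hF'.cZ]
    have h1 : V ∩ Q' = P := Finset.eq_of_subset_of_card_le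
      (fun x hx => hmemP Q' hq x hx) (by rw [h6, hPcard])
    have h2 : V ∩ Q' = Q' := Finset.eq_of_subset_of_card_le Finset.inter_subset_right
      (by rw [h6, hQcard])
    rw [← h1, h2]
  -- case analysis
  have hae := heven X' (by tauto)
  have hbe := heven Y' (by tauto)
  have hce := heven Z' (by tauto)
  rw [Nat.even_iff] at hae hbe hce
  rcases Nat.eq_zero_or_pos (V ∩ X').card with ha | ha
  · rcases Nat.eq_zero_or_pos (V ∩ Y').card with hb | hb
    · -- γ = 6
      exact Or.inr (Or.inr (hfull Z' (by tauto) (by omega)))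
    · have := eqB (Finset.card_pos.1 hb)
      -- α = γ = 0 so β = 6
      exact Or.inr (Or.inl (hfull Y' (by tauto) (by omega)))
  · have h1 := eqA (Finset.card_pos.1 ha)
    rcases Nat.eq_zero_or_pos (V ∩ Y').card with hb | hb
    · -- β = γ = 0, α = 6
      exact Or.inl (hfull X' (by tauto) (by omega))
    · have h2 := eqB (Finset.card_pos.1 hb)
      exact absurd (hT3 Y' (by tauto) (by omega)) (by tauto)

theorem eq_of_partition {R R' T : Finset α} (h1 : R ∪ T = S) (h2 : R' ∪ T = S)
    (d1 : Disjoint R T) (d2 : Disjoint R' T) : R = R' := by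
  ext x
  constructor
  · intro hx
    have hxS : x ∈ S := h1 ▸ Finset.mem_union_left _ hx
    rcases Finset.mem_union.1 (h2 ▸ hxS : x ∈ R' ∪ T) with h | h
    · exact h
    · exact absurd h (Finset.disjoint_left.1 d1 hx)
  · intro hx
    have hxS : x ∈ S := h2 ▸ Finset.mem_union_left _ hx
    rcases Finset.mem_union.1 (h1 ▸ hxS : x ∈ R ∪ T) with h | h
    · exact h
    · exact absurd h (Finset.disjoint_left.1 d2 hx)

/-- Two flowers with the same stem induce the same partition. -/
theorem stem_eq_partition (hS : IsSTS S Bl) (hF : Flower S Bl X Y Z D)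
    (hF' : Flower S Bl X' Y' Z' D') (hDD : D = D') :
    ({X, Y, Z, D} : Set (Finset α)) = {X', Y', Z', D'} := by
  have hY := petal_match hS hF hF' hDD (Or.inl rfl)
  have hZ := petal_match hS hF hF' hDD (Or.inr rfl)
  have hYZ := hF.neYZ
  have hXS : X ∪ (Y ∪ Z ∪ D) = S := by
    rw [← hF.hu]; ext x; simp only [Finset.mem_union]; tauto
  have d1 : Disjoint X (Y ∪ Z ∪ D) := by
    rw [Finset.disjoint_union_right, Finset.disjoint_union_right]
    exact ⟨⟨hF.hXY, hF.hXZ⟩, hF.hXD⟩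
  have key : ∀ Q3 : Finset α, Q3 ∪ (Y ∪ Z ∪ D) = S → Disjoint Q3 (Y ∪ Z ∪ D) → X = Q3 :=
    fun Q3 h2 d2 => eq_of_partition hXS h2 d1 d2
  rcases hY with hY1 | hY1 | hY1 <;> rcases hZ with hZ1 | hZ1 | hZ1
  · exact absurd (hY1.trans hZ1.symm) hYZ
  · -- Y = X', Z = Y', X = Z'
    have hXQ : X = Z' := by
      apply key
      · rw [hY1, hZ1, hDD, ← hF'.hu]; ext x; simp only [Finset.mem_union]; tauto
      · rw [hY1, hZ1, hDD, Finset.disjoint_union_right, Finset.disjoint_union_right]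
        exact ⟨⟨hF'.hXZ.symm, hF'.hYZ.symm⟩, hF'.hZD⟩
    rw [hXQ, hY1, hZ1, hDD]
    ext b; simp only [Set.mem_insert_iff, Set.mem_singleton_iff]; tauto
  · -- Y = X', Z = Z', X = Y'
    have hXQ : X = Y' := by
      apply key
      · rw [hY1, hZ1, hDD, ← hF'.hu]; ext x; simp only [Finset.mem_union]; tauto
      · rw [hY1, hZ1, hDD, Finset.disjoint_union_right, Finset.disjoint_union_right]
        exact ⟨⟨hF'.hXY.symm, hF'.hYZ⟩, hF'.hYD⟩
    rw [hXQ, hY1, hZ1, hDD]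
    ext b; simp only [Set.mem_insert_iff, Set.mem_singleton_iff]; tauto
  · -- Y = Y', Z = X', X = Z'
    have hXQ : X = Z' := by
      apply key
      · rw [hY1, hZ1, hDD, ← hF'.hu]; ext x; simp only [Finset.mem_union]; tauto
      · rw [hY1, hZ1, hDD, Finset.disjoint_union_right, Finset.disjoint_union_right]
        exact ⟨⟨hF'.hYZ.symm, hF'.hXZ.symm⟩, hF'.hZD⟩
    rw [hXQ, hY1, hZ1, hDD]
    ext b; simp only [Set.mem_insert_iff, Set.mem_singleton_iff]; tauto
  · exact absurd (hY1.trans hZ1.symm) hYZ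
  · -- Y = Y', Z = Z', X = X'
    have hXQ : X = X' := by
      apply key
      · rw [hY1, hZ1, hDD, ← hF'.hu]; ext x; simp only [Finset.mem_union]; tauto
      · rw [hY1, hZ1, hDD, Finset.disjoint_union_right, Finset.disjoint_union_right]
        exact ⟨⟨hF'.hXY, hF'.hXZ⟩, hF'.hXD⟩
    rw [hXQ, hY1, hZ1, hDD]
  · -- Y = Z', Z = X', X = Y'
    have hXQ : X = Y' := by
      apply key
      · rw [hY1, hZ1, hDD, ← hF'.hu]; ext x; simp only [Finset.mem_union]; tauto
      · rw [hY1, hZ1, hDD, Finset.disjoint_union_right, Finset.disjoint_union_right]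
        exact ⟨⟨hF'.hYZ, hF'.hXY.symm⟩, hF'.hYD⟩
    rw [hXQ, hY1, hZ1, hDD]
    ext b; simp only [Set.mem_insert_iff, Set.mem_singleton_iff]; tauto
  · -- Y = Z', Z = Y', X = X'
    have hXQ : X = X' := by
      apply key
      · rw [hY1, hZ1, hDD, ← hF'.hu]; ext x; simp only [Finset.mem_union]; tauto
      · rw [hY1, hZ1, hDD, Finset.disjoint_union_right, Finset.disjoint_union_right]
        exact ⟨⟨hF'.hXZ, hF'.hXY⟩, hF'.hXD⟩
    rw [hXQ, hY1, hZ1, hDD]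
    ext b; simp only [Set.mem_insert_iff, Set.mem_singleton_iff]; tauto
  · exact absurd (hY1.trans hZ1.symm) hYZ

/-- Case 1: if the full 9-set of `F` equals a 9-set of `F'`, and the stems differ,
then the stems are disjoint. -/
theorem case1_disjoint (hS : IsSTS S Bl) (hF : Flower S Bl X Y Z D)
    (hF' : Flower S Bl X' Y' Z' D') (hDne : D ≠ D') {E' : Finset α}
    (hpetE : E' = X' ∨ E' = Y' ∨ E' = Z') (hWE : X ∪ D = E' ∪ D') :
    Disjoint D D' := by
  classical
  have hDsub : D ⊆ E' ∪ D' := hWE ▸ Finset.subset_union_right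
  have hD'W : D' ⊆ X ∪ D := by rw [hWE]; exact Finset.subset_union_right
  have hE'W : E' ⊆ X ∪ D := by rw [hWE]; exact Finset.subset_union_left
  have hYW : ∀ y ∈ Y, y ∉ X ∪ D := by
    intro y hy h
    rcases Finset.mem_union.1 h with h' | h'
    · exact Finset.disjoint_left.1 hF.hXY h' hy
    · exact Finset.disjoint_left.1 hF.hYD hy h'
  have hYD' : ∀ y ∈ Y, y ∉ D' := fun y hy h => hYW y hy (hD'W h)
  have hYE' : ∀ y ∈ Y, y ∉ E' := fun y hy h => hYW y hy (hE'W h)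
  -- some stem point of F outside D'
  obtain ⟨d, hdD, hdD'⟩ : ∃ d ∈ D, d ∉ D' := by
    by_contra h
    push_neg at h
    exact hDne (Finset.eq_of_subset_of_card_le h (by rw [hF.cD, hF'.cD]))
  have hdE' : d ∈ E' := by
    rcases Finset.mem_union.1 (hDsub hdD) with h | h
    · exact h
    · exact absurd h hdD'
  have hdS : d ∈ S := hF.subD hdD
  -- generic inner argument, P1 P2 the two petals of F' other than E'
  have key : ∀ P1 P2 : Finset α, (P1 = X' ∨ P1 = Y' ∨ P1 = Z') →
      (P2 = X' ∨ P2 = Y' ∨ P2 = Z') → E' ≠ P1 → E' ≠ P2 → P1 ≠ P2 → Disjoint D D' := by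
    intro P1 P2 hp1 hp2 hE1 hE2 h12
    have hcover : ∀ w ∈ S, w ∈ E' ∨ w ∈ P1 ∨ w ∈ P2 ∨ w ∈ D' := by
      intro w hw
      have := hF'.mem_parts hw
      rcases hpetE with rfl | rfl | rfl <;> rcases hp1 with rfl | rfl | rfl <;>
        rcases hp2 with rfl | rfl | rfl <;> tauto
    have hYsub : ∀ y ∈ Y, y ∈ P1 ∨ y ∈ P2 := by
      intro y hy
      rcases hcover y (hF.subY hy) with h | h | h | h
      · exact absurd h (hYE' y hy)
      · exact Or.inl h
      · exact Or.inr h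
      · exact absurd h (hYD' y hy)
    -- the d-matching swaps Y ∩ P1 and Y ∩ P2
    have hswap : ∀ Q1 Q2 : Finset α, (Q1 = X' ∨ Q1 = Y' ∨ Q1 = Z') →
        (Q2 = X' ∨ Q2 = Y' ∨ Q2 = Z') → E' ≠ Q1 → E' ≠ Q2 → Q1 ≠ Q2 →
        (Y ∩ Q1).card ≤ (Y ∩ Q2).card := by
      intro Q1 Q2 hq1 hq2 he1 he2 hq12
      apply Finset.card_le_card_of_injOn (fun y => trd Bl d y)
      · intro y hy
        have hyY := (Finset.mem_inter.1 hy).1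
        have hyQ := (Finset.mem_inter.1 hy).2
        refine Finset.mem_inter.2 ⟨hF.trd_petal hS (Or.inl rfl) hdD hyY, ?_⟩
        exact hF'.trd_third hS hpetE hq1 hq2 he1 he2 hq12 hdE' hyQ
      · intro y hy y' hy' heq
        have hyY := (Finset.mem_inter.1 hy).1
        have hy'Y := (Finset.mem_inter.1 hy').1
        have hdy : d ≠ y := fun h => Finset.disjoint_right.1 hF.hYD (h ▸ hdD) hyY
        have hdy' : d ≠ y' := fun h => Finset.disjoint_right.1 hF.hYD (h ▸ hdD) hy'Y
        have := trd_invol hS hdS (hF.subY hyY) hdy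
        have h2 := trd_invol hS hdS (hF.subY hy'Y) hdy'
        simp only at heq
        rw [← this, heq, h2]
    have hYcards : (Y ∩ P1).card = (Y ∩ P2).card :=
      le_antisymm (hswap P1 P2 hp1 hp2 hE1 hE2 h12)
        (hswap P2 P1 hp2 hp1 hE2 hE1 h12.symm)
    have hYsum : (Y ∩ P1).card + (Y ∩ P2).card = 6 := by
      have hU : Y = (Y ∩ P1) ∪ (Y ∩ P2) := by
        ext x
        simp only [Finset.mem_union, Finset.mem_inter]
        constructor
        · intro hx; rcases hYsub x hx with h | h <;> tauto
        · tauto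
      have hdisj : Disjoint (Y ∩ P1) (Y ∩ P2) :=
        (hF'.petal_disj hp1 hp2 h12).mono Finset.inter_subset_right Finset.inter_subset_right
      rw [← Finset.card_union_of_disjoint hdisj, ← hU, hF.cY]
    have h3 : (Y ∩ P1).card = 3 := by omega
    -- now derive disjointness of the stems
    rw [Finset.disjoint_left]
    intro p hpD hpD'
    have hpS : p ∈ S := hF.subD hpD
    -- fixed-point-free involution on Y ∩ P1 of odd size 3
    have heven : Even ((Y ∩ P1).card) := by
      apply even_inter_of_matching hS hpS
        (fun h => Finset.disjoint_right.1 hF.hYD hpD (Finset.mem_inter.1 h).1)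
        ((Finset.inter_subset_left).trans hF.subY)
      intro y hy
      have hyY := (Finset.mem_inter.1 hy).1
      have hyQ := (Finset.mem_inter.1 hy).2
      have htY : trd Bl p y ∈ Y := hF.trd_petal hS (Or.inl rfl) hpD hyY
      refine Finset.mem_inter.2 ⟨htY, ?_⟩
      rcases hp1 with rfl | hp1'
      · -- P1 = X'
        have hpy : p ≠ y := fun h => Finset.disjoint_right.1 hF.hYD hpD (h ▸ hyY)
        have hsub : blk Bl p y ⊆ P1 ∪ D' := hF'.closure hS (Or.inl rfl)
          (Finset.mem_union_right _ hpD') (Finset.mem_union_left _ hyQ) hpy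
          (fun h => Finset.disjoint_left.1 (hF'.petal_disjD (Or.inl rfl)) hyQ h.2)
        have := hsub (trd_mem_blk hS hpS (hF.subY hyY) hpy)
        rcases Finset.mem_union.1 this with h | h
        · exact h
        · exact absurd h (hYD' _ htY)
      · exact hF'.trd_petal hS hp1' hpD' hyQ
    rw [h3, Nat.even_iff] at heven
    omega
  rcases hpetE with rfl | rfl | rfl
  · exact key Y' Z' (by tauto) (by tauto) hF'.neXY hF'.neXZ hF'.neYZ
  · exact key X' Z' (by tauto) (by tauto) hF'.neXY.symm hF'.neYZ hF'.neXZ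
  · exact key X' Y' (by tauto) (by tauto) hF'.neXZ.symm hF'.neYZ.symm hF'.neXY

end TwoFlowersAux
namespace TwoFlowersAux
set_option linter.unusedSectionVars false
set_option maxHeartbeats 1000000

variable {α : Type*} [DecidableEq α]
variable {S : Finset α} {Bl : Finset (Finset α)} {X Y Z D X' Y' Z' D' : Finset α}

/-- Case 2b: both stems avoid the other full 9-set; if moreover `D'` puts at least 2
points into `Y`, then `Y ∪ D` is a 9-set of `F'` carrying a sub-STS(9). -/
theorem case2b (hS : IsSTS S Bl) (hF : Flower S Bl X Y Z D) (hF' : Flower S Bl X' Y' Z' D')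
    (h1 : (X ∪ D) ∩ D' = ∅) (h1' : (X' ∪ D') ∩ D = ∅)
    (hcards' : ((X' ∪ D') ∩ Y).card = 3) (hs : 2 ≤ (D' ∩ Y).card) :
    ∃ B9, B9 ⊆ Bl ∧ IsSTS (Y ∪ D) B9 ∧
      ∃ E', (E' = X' ∨ E' = Y' ∨ E' = Z') ∧ Y ∪ D = E' ∪ D' := by
  classical
  have hDD' : Disjoint D D' := by
    rw [Finset.disjoint_left]
    intro a haD haD'
    have : a ∈ (X ∪ D) ∩ D' := Finset.mem_inter.2 ⟨Finset.mem_union_right _ haD, haD'⟩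
    rw [h1] at this
    exact absurd this (Finset.notMem_empty a)
  have hDX' : Disjoint D X' := by
    rw [Finset.disjoint_left]
    intro a haD haX'
    have : a ∈ (X' ∪ D') ∩ D := Finset.mem_inter.2 ⟨Finset.mem_union_left _ haX', haD⟩
    rw [h1'] at this
    exact absurd this (Finset.notMem_empty a)
  set V := Y ∪ D with hV
  have hVS : V ⊆ S := Finset.union_subset hF.subY hF.subD
  have hVcard : V.card = 9 := by
    rw [hV, Finset.card_union_of_disjoint hF.hYD, hF.cY, hF.cD]
  -- closure of V for pairs not both in the stem
  have hVblk : ∀ p ∈ V, ∀ q ∈ V, p ≠ q → ¬(p ∈ D ∧ q ∈ D) → blk Bl p q ⊆ V :=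
    fun p hp q hq hpq hno => hF.closure hS (Or.inr (Or.inl rfl)) hp hq hpq hno
  -- cardinalities
  have hVX' : V ∩ X' = Y ∩ X' := by
    ext x
    simp only [Finset.mem_inter, hV, Finset.mem_union]
    constructor
    · rintro ⟨hY | hD, hX'⟩
      · exact ⟨hY, hX'⟩
      · exact absurd hX' (Finset.disjoint_left.1 hDX' hD)
    · rintro ⟨hY, hX'⟩; exact ⟨Or.inl hY, hX'⟩
  have hVD' : V ∩ D' = Y ∩ D' := by
    ext x
    simp only [Finset.mem_inter, hV, Finset.mem_union]
    constructor
    · rintro ⟨hY | hD, hD'⟩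
      · exact ⟨hY, hD'⟩
      · exact absurd hD' (Finset.disjoint_left.1 hDD' hD)
    · rintro ⟨hY, hD'⟩; exact ⟨Or.inl hY, hD'⟩
  have hsplit : (X' ∩ Y).card + (D' ∩ Y).card = 3 := by
    have hU : (X' ∪ D') ∩ Y = (X' ∩ Y) ∪ (D' ∩ Y) := by
      ext x; simp only [Finset.mem_inter, Finset.mem_union]; tauto
    have hdisj : Disjoint (X' ∩ Y) (D' ∩ Y) :=
      (hF'.hXD).mono Finset.inter_subset_left Finset.inter_subset_left
    rw [← Finset.card_union_of_disjoint hdisj, ← hU, hcards']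
  have ha2 : (V ∩ X').card = (X' ∩ Y).card := by
    rw [hVX', Finset.inter_comm]
  have ht2 : (V ∩ D').card = (D' ∩ Y).card := by
    rw [hVD', Finset.inter_comm]
  have hsum : (V ∩ X').card + (V ∩ Y').card + (V ∩ Z').card + (V ∩ D').card = 9 := by
    rw [parts_card hF' hVS, hVcard]
  have hs3 : (D' ∩ Y).card ≤ 3 := hF'.cD ▸ Finset.card_le_card Finset.inter_subset_left
  -- matching evens (used in the s = 2 case)
  have hmatch : ∀ d' ∈ D' ∩ Y, ∀ P' : Finset α, (P' = Y' ∨ P' = Z') →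
      ∀ p ∈ V ∩ P', trd Bl d' p ∈ V ∩ P' := by
    intro d' hd' P' hpet p hp
    have hd'D' : d' ∈ D' := (Finset.mem_inter.1 hd').1
    have hd'Y : d' ∈ Y := (Finset.mem_inter.1 hd').2
    have hpP : p ∈ P' := (Finset.mem_inter.1 hp).2
    have hd'p : d' ≠ p := fun h => Finset.disjoint_right.1 (hF'.petal_disjD (Or.inr hpet))
      hd'D' (h ▸ hpP)
    have hd'notD : d' ∉ D := Finset.disjoint_right.1 hDD' hd'D'
    refine Finset.mem_inter.2 ⟨?_, hF'.trd_petal hS hpet hd'D' hpP⟩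
    exact hVblk d' (Finset.mem_union_left _ hd'Y) p (Finset.mem_inter.1 hp).1 hd'p
      (fun h => hd'notD h.1) (trd_mem_blk hS (hF.subY hd'Y) (hVS (Finset.mem_inter.1 hp).1) hd'p)
  rcases (show (D' ∩ Y).card = 2 ∨ (D' ∩ Y).card = 3 by omega) with hscase | hscase
  · -- s = 2 : contradiction
    exfalso
    obtain ⟨d', hd'⟩ : (D' ∩ Y).Nonempty := Finset.card_pos.1 (by omega)
    have hbe : Even ((V ∩ Y').card) := by
      apply even_inter_of_matching hS (hF'.subD (Finset.mem_inter.1 hd').1)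
        (fun h => Finset.disjoint_right.1 (hF'.petal_disjD (Or.inr (Or.inl rfl)))
          (Finset.mem_inter.1 hd').1 (Finset.mem_inter.1 h).2)
        ((Finset.inter_subset_left).trans hVS)
      exact hmatch d' hd' Y' (Or.inl rfl)
    have hce : Even ((V ∩ Z').card) := by
      apply even_inter_of_matching hS (hF'.subD (Finset.mem_inter.1 hd').1)
        (fun h => Finset.disjoint_right.1 (hF'.petal_disjD (Or.inr (Or.inr rfl)))
          (Finset.mem_inter.1 hd').1 (Finset.mem_inter.1 h).2)
        ((Finset.inter_subset_left).trans hVS)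
      exact hmatch d' hd' Z' (Or.inr rfl)
    -- a2 = 1, so pick the pivot point
    obtain ⟨x, hx⟩ : (V ∩ X').Nonempty := Finset.card_pos.1 (by omega)
    have hxX' : x ∈ X' := (Finset.mem_inter.1 hx).2
    have hxnD : x ∉ D := fun h => Finset.disjoint_left.1 hDX' h hxX'
    have hpivot : ∀ P' R' : Finset α, (P' = Y' ∨ P' = Z') → (R' = Y' ∨ R' = Z') → P' ≠ R' →
        (V ∩ P').card ≤ (V ∩ R').card := by
      intro P' R' hp hr hPR
      have hpet : P' = X' ∨ P' = Y' ∨ P' = Z' := Or.inr hp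
      have hret : R' = X' ∨ R' = Y' ∨ R' = Z' := Or.inr hr
      have hPX : P' ≠ X' := by
        rcases hp with rfl | rfl
        exacts [hF'.neXY.symm, hF'.neXZ.symm]
      have hRX : X' ≠ R' := by
        rcases hr with rfl | rfl
        exacts [hF'.neXY, hF'.neXZ]
      apply card_le_of_pivot hS (hF'.petal_sub (Or.inl rfl) hxX')
        ((Finset.inter_subset_left).trans hVS)
        (fun h => Finset.disjoint_right.1 (hF'.petal_disj hpet (Or.inl rfl) hPX) hxX'
          (Finset.mem_inter.1 h).2)
      intro p hp'
      have hpP : p ∈ P' := (Finset.mem_inter.1 hp').2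
      have hne : p ≠ x := fun h => Finset.disjoint_right.1
        (hF'.petal_disj hpet (Or.inl rfl) hPX) hxX' (h ▸ hpP)
      refine Finset.mem_inter.2 ⟨?_,
        hF'.trd_third hS hpet (Or.inl rfl) hret hPX hPR hRX hpP hxX'⟩
      exact hVblk p (Finset.mem_inter.1 hp').1 x (Finset.mem_inter.1 hx).1 hne
        (fun h => hxnD h.2)
        (trd_mem_blk hS (hVS (Finset.mem_inter.1 hp').1) (hVS (Finset.mem_inter.1 hx).1) hne)
    have heq : (V ∩ Y').card = (V ∩ Z').card :=
      le_antisymm (hpivot Y' Z' (Or.inl rfl) (Or.inr rfl) hF'.neYZ)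
        (hpivot Z' Y' (Or.inr rfl) (Or.inl rfl) hF'.neYZ.symm)
    rw [Nat.even_iff] at hbe hce
    omega
  · -- s = 3 : D' ⊆ Y and the 9-sets coincide
    have hD'Y : D' ⊆ Y := by
      have : D' ∩ Y = D' := Finset.eq_of_subset_of_card_le Finset.inter_subset_left
        (by rw [hscase, hF'.cD])
      rw [← this]; exact Finset.inter_subset_right
    have ha0 : V ∩ X' = ∅ := Finset.card_eq_zero.1 (by omega)
    have hbc : (V ∩ Y').card + (V ∩ Z').card = 6 := by omega
    -- one of the two is empty
    have hzero : (V ∩ Y').card = 0 ∨ (V ∩ Z').card = 0 := by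
      by_contra h
      push_neg at h
      obtain ⟨hb, hc⟩ := h
      -- not both intersections within D
      have hnotboth : ¬((V ∩ Y') ⊆ D ∧ (V ∩ Z') ⊆ D) := by
        rintro ⟨hYD, hZD⟩
        have hsub : (V ∩ Y') ∪ (V ∩ Z') ⊆ D := Finset.union_subset hYD hZD
        have hdisj : Disjoint (V ∩ Y') (V ∩ Z') :=
          hF'.hYZ.mono Finset.inter_subset_right Finset.inter_subset_right
        have := Finset.card_le_card hsub
        rw [Finset.card_union_of_disjoint hdisj, hF.cD] at this
        omega
      have hcross : False := by
        rcases not_and_or.1 hnotboth with h' | h'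
        · obtain ⟨p, hpV, hpnD⟩ := Finset.not_subset.1 h'
          obtain ⟨q, hqV⟩ : (V ∩ Z').Nonempty := Finset.card_pos.1 (by omega)
          have hpY' : p ∈ Y' := (Finset.mem_inter.1 hpV).2
          have hqZ' : q ∈ Z' := (Finset.mem_inter.1 hqV).2
          have hpq : p ≠ q := fun h => Finset.disjoint_left.1 hF'.hYZ hpY' (h ▸ hqZ')
          have htX' : trd Bl p q ∈ X' := hF'.trd_third hS (Or.inr (Or.inl rfl))
            (Or.inr (Or.inr rfl)) (Or.inl rfl) hF'.neYZ hF'.neXY.symm hF'.neXZ.symm hpY' hqZ'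
          have htV : trd Bl p q ∈ V := hVblk p (Finset.mem_inter.1 hpV).1 q
            (Finset.mem_inter.1 hqV).1 hpq (fun h => hpnD h.1)
            (trd_mem_blk hS (hVS (Finset.mem_inter.1 hpV).1) (hVS (Finset.mem_inter.1 hqV).1) hpq)
          have : trd Bl p q ∈ V ∩ X' := Finset.mem_inter.2 ⟨htV, htX'⟩
          rw [ha0] at this
          exact absurd this (Finset.notMem_empty _)
        · obtain ⟨q, hqV, hqnD⟩ := Finset.not_subset.1 h'
          obtain ⟨p, hpV⟩ : (V ∩ Y').Nonempty := Finset.card_pos.1 (by omega)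
          have hpY' : p ∈ Y' := (Finset.mem_inter.1 hpV).2
          have hqZ' : q ∈ Z' := (Finset.mem_inter.1 hqV).2
          have hqp : q ≠ p := fun h => Finset.disjoint_right.1 hF'.hYZ hqZ' (h ▸ hpY')
          have htX' : trd Bl q p ∈ X' := hF'.trd_third hS (Or.inr (Or.inr rfl))
            (Or.inr (Or.inl rfl)) (Or.inl rfl) hF'.neYZ.symm hF'.neXZ.symm hF'.neXY.symm hqZ' hpY'
          have htV : trd Bl q p ∈ V := hVblk q (Finset.mem_inter.1 hqV).1 p
            (Finset.mem_inter.1 hpV).1 hqp (fun h => hqnD h.1)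
            (trd_mem_blk hS (hVS (Finset.mem_inter.1 hqV).1) (hVS (Finset.mem_inter.1 hpV).1) hqp)
          have : trd Bl q p ∈ V ∩ X' := Finset.mem_inter.2 ⟨htV, htX'⟩
          rw [ha0] at this
          exact absurd this (Finset.notMem_empty _)
      exact hcross
    -- common helper: derive everything once we know V = E' ∪ D'
    have hfinish : ∀ E' : Finset α, (E' = X' ∨ E' = Y' ∨ E' = Z') → V = E' ∪ D' →
        (∃ C, IsAlmostSubSTS Bl (E' ∪ D') C D') →
        ∃ B9, B9 ⊆ Bl ∧ IsSTS (Y ∪ D) B9 ∧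
          ∃ E'', (E'' = X' ∨ E'' = Y' ∨ E'' = Z') ∧ Y ∪ D = E'' ∪ D' := by
      intro E' hpetE hVeq hC
      obtain ⟨C', hC'Bl, hD'C', hC'⟩ := hC
      -- the stem D is a block of Bl
      obtain ⟨d1, hd1, d2, hd2, hd12⟩ := Finset.one_lt_card.1
        (show 1 < D.card by rw [hF.cD]; omega)
      have hd1V : d1 ∈ E' ∪ D' := hVeq ▸ (Finset.mem_union_right _ hd1 : d1 ∈ V)
      have hd2V : d2 ∈ E' ∪ D' := hVeq ▸ (Finset.mem_union_right _ hd2 : d2 ∈ V)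
      obtain ⟨b, ⟨hbmem, h1b, h2b⟩, -⟩ := hC'.2 d1 hd1V d2 hd2V hd12
      have hbC' : b ∈ C' := by
        rcases Finset.mem_insert.1 hbmem with rfl | h
        · exact absurd hd1 (Finset.disjoint_right.1 hDD' h1b)
        · exact h
      have hbBl : b ∈ Bl := hC'Bl hbC'
      have hbblk : b = blk Bl d1 d2 :=
        blk_unique hS (hF.subD hd1) (hF.subD hd2) hd12 hbBl h1b h2b
      have hbXD : b ⊆ X ∪ D := hbblk ▸ hF.closureD hS hd1 hd2 hd12
      have hbYD : b ⊆ Y ∪ D := by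
        have := (hC'.1 b hbmem).1
        rw [← hVeq] at this
        exact this
      have hbD : b ⊆ D := by
        intro x hx
        rcases Finset.mem_union.1 (hbXD hx) with h | h
        · rcases Finset.mem_union.1 (hbYD hx) with h' | h'
          · exact absurd h' (Finset.disjoint_left.1 hF.hXY h)
          · exact h'
        · exact h
      have hbcard : b.card = 3 := (hS.1 b hbBl).2
      have hbD' : b = D := Finset.eq_of_subset_of_card_le hbD (by rw [hbcard, hF.cD])
      have hDBl : D ∈ Bl := hbD' ▸ hbBl
      obtain ⟨C1, hC1Bl, hDC1, hC1⟩ := hF.hP.2.1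
      refine ⟨insert D C1, ?_, hC1, E', hpetE, hVeq⟩
      intro c hc
      rcases Finset.mem_insert.1 hc with rfl | h
      · exact hDBl
      · exact hC1Bl h
    rcases hzero with hb0 | hc0
    · -- V ∩ Y' = ∅ so V ∩ Z' has 6 elements: V = Z' ∪ D'
      have hc6 : (V ∩ Z').card = 6 := by omega
      have hZ'V : V ∩ Z' = Z' := Finset.eq_of_subset_of_card_le Finset.inter_subset_right
        (by rw [hc6, hF'.cZ])
      have hsub : Z' ∪ D' ⊆ V := Finset.union_subset
        (hZ'V ▸ Finset.inter_subset_left) ((hD'Y).trans Finset.subset_union_left)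
      have hVeq : V = Z' ∪ D' := by
        refine (Finset.eq_of_subset_of_card_le hsub ?_).symm
        rw [Finset.card_union_of_disjoint (hF'.hZD), hVcard, hF'.cZ, hF'.cD]
      exact hfinish Z' (Or.inr (Or.inr rfl)) hVeq hF'.hP.2.2
    · have hb6 : (V ∩ Y').card = 6 := by omega
      have hY'V : V ∩ Y' = Y' := Finset.eq_of_subset_of_card_le Finset.inter_subset_right
        (by rw [hb6, hF'.cY])
      have hsub : Y' ∪ D' ⊆ V := Finset.union_subset
        (hY'V ▸ Finset.inter_subset_left) ((hD'Y).trans Finset.subset_union_left)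
      have hVeq : V = Y' ∪ D' := by
        refine (Finset.eq_of_subset_of_card_le hsub ?_).symm
        rw [Finset.card_union_of_disjoint (hF'.hYD), hVcard, hF'.cY, hF'.cD]
      exact hfinish Y' (Or.inr (Or.inl rfl)) hVeq hF'.hP.2.1

end TwoFlowersAux
set_option maxHeartbeats 1000000 in
theorem two_flowers (S : Finset α) (Bl : Finset (Finset α))
    (A B C D A' B' C' D' : Finset α)
    (hSTS : IsSTS S Bl) (hS21 : S.card = 21)
    (hf : IsFlower S Bl A B C D) (hf' : IsFlower S Bl A' B' C' D')
    (hne : ({A, B, C, D} : Set (Finset α)) ≠ {A', B', C', D'}) :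
    Disjoint D D' ∧
    ∃ E E' : Finset α, (E = A ∨ E = B ∨ E = C) ∧ (E' = A' ∨ E' = B' ∨ E' = C') ∧
      D ∪ E = D' ∪ E' ∧
      ∃ B9 : Finset (Finset α), B9 ⊆ Bl ∧ IsSTS (D ∪ E) B9 := by
  classical
  obtain ⟨X, Y, Z, hF, hXm, hYm, hZm, hset⟩ := TwoFlowersAux.flower_of_isFlower hf
  obtain ⟨X', Y', Z', hF', hXm', hYm', hZm', hset'⟩ := TwoFlowersAux.flower_of_isFlower hf'
  have hne' : ({X, Y, Z, D} : Set (Finset α)) ≠ {X', Y', Z', D'} := by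
    rw [hset, hset']; exact hne
  by_cases hDD : D = D'
  · exact absurd (TwoFlowersAux.stem_eq_partition hSTS hF hF' hDD) hne'
  have mapE' : ∀ E' : Finset α, (E' = X' ∨ E' = Y' ∨ E' = Z') →
      E' = A' ∨ E' = B' ∨ E' = C' := by
    intro E' h
    rcases h with rfl | rfl | rfl
    exacts [hXm', hYm', hZm']
  have mapE : ∀ E : Finset α, (E = X ∨ E = Y ∨ E = Z) → E = A ∨ E = B ∨ E = C := by
    intro E h
    rcases h with rfl | rfl | rfl
    exacts [hXm, hYm, hZm]
  rcases TwoFlowersAux.stepA hSTS hF hF' with ⟨h1, hc1, hc2, hc3⟩ | ⟨E', hpetE, hWE⟩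
  · -- W ∩ D' = ∅
    have hDisj : Disjoint D D' := by
      rw [Finset.disjoint_left]
      intro a haD haD'
      have : a ∈ (X ∪ D) ∩ D' := Finset.mem_inter.2 ⟨Finset.mem_union_right _ haD, haD'⟩
      rw [h1] at this
      exact absurd this (Finset.notMem_empty a)
    rcases TwoFlowersAux.stepA hSTS hF' hF with ⟨h1', hc1', hc2', hc3'⟩ | ⟨E, hpetE, hW'E⟩
    · -- case 2b
      have hD'YZ : ∀ a ∈ D', a ∈ Y ∨ a ∈ Z := by
        intro a ha
        rcases hF.mem_parts (hF'.subD ha) with h | h | h | h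
        · exfalso
          have : a ∈ (X ∪ D) ∩ D' := Finset.mem_inter.2 ⟨Finset.mem_union_left _ h, ha⟩
          rw [h1] at this
          exact absurd this (Finset.notMem_empty a)
        · exact Or.inl h
        · exact Or.inr h
        · exact absurd ha (Finset.disjoint_left.1 hDisj h)
      have hsYZ : (D' ∩ Y).card + (D' ∩ Z).card = 3 := by
        have hu : (D' ∩ Y) ∪ (D' ∩ Z) = D' := by
          ext x
          simp only [Finset.mem_union, Finset.mem_inter]
          constructor
          · rintro (⟨h, -⟩ | ⟨h, -⟩) <;> exact h
          · intro hx
            rcases hD'YZ x hx with h | h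
            · exact Or.inl ⟨hx, h⟩
            · exact Or.inr ⟨hx, h⟩
        have hdisj : Disjoint (D' ∩ Y) (D' ∩ Z) :=
          hF.hYZ.mono Finset.inter_subset_right Finset.inter_subset_right
        rw [← Finset.card_union_of_disjoint hdisj, hu, hF'.cD]
      by_cases hscase : 2 ≤ (D' ∩ Y).card
      · obtain ⟨B9, hB9Bl, hB9STS, E', hpetE', hVeq⟩ :=
          TwoFlowersAux.case2b hSTS hF hF' h1 h1' hc2' hscase
        refine ⟨hDisj, Y, E', hYm, mapE' E' hpetE', ?_, B9, hB9Bl, ?_⟩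
        · rw [Finset.union_comm D Y, Finset.union_comm D' E']; exact hVeq
        · rw [Finset.union_comm D Y]; exact hB9STS
      · have hscase' : 2 ≤ (D' ∩ Z).card := by omega
        obtain ⟨B9, hB9Bl, hB9STS, E', hpetE', hVeq⟩ :=
          TwoFlowersAux.case2b hSTS hF.swap hF' h1 h1' hc3' hscase'
        refine ⟨hDisj, Z, E', hZm, mapE' E' hpetE', ?_, B9, hB9Bl, ?_⟩
        · rw [Finset.union_comm D Z, Finset.union_comm D' E']; exact hVeq
        · rw [Finset.union_comm D Z]; exact hB9STS
    · -- case 2a : X' ∪ D' = E ∪ D with E a petal of F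
      obtain ⟨C0', hC0'Bl, hC0'⟩ := hF'.hP.1
      refine ⟨hDisj, E, X', mapE E hpetE, hXm', ?_, C0', hC0'Bl, ?_⟩
      · rw [Finset.union_comm D E, Finset.union_comm D' X']; exact hW'E.symm
      · have : D ∪ E = X' ∪ D' := by
          rw [Finset.union_comm D E]; exact hW'E.symm
        rw [this]; exact hC0'
  · -- case 1 : X ∪ D = E' ∪ D'
    have hDisj : Disjoint D D' := TwoFlowersAux.case1_disjoint hSTS hF hF' hDD hpetE hWE
    obtain ⟨C0, hC0Bl, hC0⟩ := hF.hP.1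
    refine ⟨hDisj, X, E', hXm, mapE' E' hpetE, ?_, C0, hC0Bl, ?_⟩
    · rw [Finset.union_comm D X, Finset.union_comm D' E']; exact hWE
    · rw [Finset.union_comm D X]; exact hC0
end

section
/- If a TD(3,6) with groups A, B, C has a sub-TD(3,3) with groups A₀ ⊆ A, B₀ ⊆ B, C₀ ⊆ C, then it has exactly three other sub-TD(3,3)'s, namely with group sets (A₀, B₁, C₁), (A₁, B₀, C₁), and (A₁, B₁, C₀), where A₁ = A \ A₀, B₁ = B \ B₀, C₁ = C \ C₀. -/
variable {α : Type*} [DecidableEq α]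

lemma IsTD3.swap12 {A B C : Finset α} {T : Finset (Finset α)} (h : IsTD3 A B C T) :
    IsTD3 B A C T := by
  obtain ⟨h1, h2⟩ := h
  constructor
  · intro b hb
    obtain ⟨hs, hA1, hB1, hC1⟩ := h1 b hb
    refine ⟨by rw [Finset.union_comm B A]; exact hs, hB1, hA1, hC1⟩
  · intro p q hpq
    rcases hpq with ⟨hp, hq⟩ | ⟨hp, hq⟩ | ⟨hp, hq⟩
    · obtain ⟨b, ⟨hb, hqb, hpb⟩, hu⟩ := h2 q p (Or.inl ⟨hq, hp⟩)
      exact ⟨b, ⟨hb, hpb, hqb⟩, fun b' hb' => hu b' ⟨hb'.1, hb'.2.2, hb'.2.1⟩⟩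
    · exact h2 p q (Or.inr (Or.inr ⟨hp, hq⟩))
    · exact h2 p q (Or.inr (Or.inl ⟨hp, hq⟩))

lemma IsTD3.swap23 {A B C : Finset α} {T : Finset (Finset α)} (h : IsTD3 A B C T) :
    IsTD3 A C B T := by
  obtain ⟨h1, h2⟩ := h
  constructor
  · intro b hb
    obtain ⟨hs, hA1, hB1, hC1⟩ := h1 b hb
    refine ⟨by rw [Finset.union_right_comm]; exact hs, hA1, hC1, hB1⟩
  · intro p q hpq
    rcases hpq with ⟨hp, hq⟩ | ⟨hp, hq⟩ | ⟨hp, hq⟩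
    · exact h2 p q (Or.inr (Or.inl ⟨hp, hq⟩))
    · exact h2 p q (Or.inl ⟨hp, hq⟩)
    · obtain ⟨b, ⟨hb, hqb, hpb⟩, hu⟩ := h2 q p (Or.inr (Or.inr ⟨hq, hp⟩))
      exact ⟨b, ⟨hb, hpb, hqb⟩, fun b' hb' => hu b' ⟨hb'.1, hb'.2.2, hb'.2.1⟩⟩

lemma pt_spec {β X : Finset α} (h : (β ∩ X).card = 1) :
    ∃ x, x ∈ β ∧ x ∈ X ∧ ∀ y ∈ β, y ∈ X → y = x := by
  obtain ⟨x, hx⟩ := Finset.card_eq_one.mp h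
  have hxm : x ∈ β ∩ X := hx ▸ Finset.mem_singleton_self x
  rw [Finset.mem_inter] at hxm
  refine ⟨x, hxm.1, hxm.2, fun y hy hyX => ?_⟩
  have : y ∈ β ∩ X := Finset.mem_inter.mpr ⟨hy, hyX⟩
  rw [hx, Finset.mem_singleton] at this
  exact this

lemma sub_block_mem {A B C A₀ B₀ C₀ : Finset α} {T T₀ : Finset (Finset α)}
    (hTD : IsTD3 A B C T) (hA₀ : A₀ ⊆ A) (hB₀ : B₀ ⊆ B)
    (hT₀ : T₀ ⊆ T) (hTD₀ : IsTD3 A₀ B₀ C₀ T₀)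
    {β : Finset α} (hβ : β ∈ T) {a b : α} (haβ : a ∈ β) (ha : a ∈ A₀)
    (hbβ : b ∈ β) (hb : b ∈ B₀) : β ∈ T₀ := by
  obtain ⟨β', ⟨hβ', ha', hb'⟩, _⟩ := hTD₀.2 a b (Or.inl ⟨ha, hb⟩)
  obtain ⟨γ, _, hu⟩ := hTD.2 a b (Or.inl ⟨hA₀ ha, hB₀ hb⟩)
  have h1 := hu β ⟨hβ, haβ, hbβ⟩
  have h2 := hu β' ⟨hT₀ hβ', ha', hb'⟩
  rw [h1, ← h2]
  exact hβ'

lemma sub_block_third {A B C A₀ B₀ C₀ : Finset α} {T T₀ : Finset (Finset α)}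
    (hTD : IsTD3 A B C T) (hA₀ : A₀ ⊆ A) (hB₀ : B₀ ⊆ B) (hC₀ : C₀ ⊆ C)
    (hT₀ : T₀ ⊆ T) (hTD₀ : IsTD3 A₀ B₀ C₀ T₀)
    {β : Finset α} (hβ : β ∈ T) {a b c : α} (haβ : a ∈ β) (ha : a ∈ A₀)
    (hbβ : b ∈ β) (hb : b ∈ B₀) (hcβ : c ∈ β) (hc : c ∈ C) : c ∈ C₀ := by
  have hm : β ∈ T₀ := sub_block_mem hTD hA₀ hB₀ hT₀ hTD₀ hβ haβ ha hbβ hb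
  obtain ⟨c', hc'β, hc'C₀, _⟩ := pt_spec (hTD₀.1 β hm).2.2.2
  obtain ⟨cc, _, _, hcu⟩ := pt_spec (hTD.1 β hβ).2.2.2
  have e1 := hcu c hcβ hc
  have e2 := hcu c' hc'β (hC₀ hc'C₀)
  rw [e1, ← e2]
  exact hc'C₀

lemma card_le_via {A B C : Finset α} {T : Finset (Finset α)}
    (hTD : IsTD3 A B C T) {a : α} (ha : a ∈ A)
    {S₁ S₂ : Finset α} (hS₁ : S₁ ⊆ B) (hS₂ : S₂ ⊆ C)
    (hex : ∀ b ∈ S₁, ∃ c ∈ S₂, ∃ γ ∈ T, a ∈ γ ∧ b ∈ γ ∧ c ∈ γ) :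
    S₁.card ≤ S₂.card := by
  classical
  have hex' : ∀ b : α, ∃ c, b ∈ S₁ → c ∈ S₂ ∧ ∃ γ ∈ T, a ∈ γ ∧ b ∈ γ ∧ c ∈ γ := by
    intro b
    by_cases hb : b ∈ S₁
    · obtain ⟨c, hc, h⟩ := hex b hb
      exact ⟨c, fun _ => ⟨hc, h⟩⟩
    · exact ⟨a, fun h => absurd h hb⟩
  choose f hf using hex'
  apply Finset.card_le_card_of_injOn f
  · intro b hb; exact (hf b hb).1
  · intro b₁ hb₁ b₂ hb₂ heq
    rw [Finset.mem_coe] at hb₁ hb₂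
    obtain ⟨hc₁, γ₁, hγ₁, ha₁, hb₁', hc₁'⟩ := hf b₁ hb₁
    obtain ⟨hc₂, γ₂, hγ₂, ha₂, hb₂', hc₂'⟩ := hf b₂ hb₂
    obtain ⟨δ, _, hu⟩ := hTD.2 a (f b₁) (Or.inr (Or.inl ⟨ha, hS₂ hc₁⟩))
    have e1 := hu γ₁ ⟨hγ₁, ha₁, hc₁'⟩
    have e2 := hu γ₂ ⟨hγ₂, ha₂, by rw [heq]; exact hc₂'⟩
    obtain ⟨bb, _, _, hbu⟩ := pt_spec (hTD.1 γ₁ hγ₁).2.2.1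
    have eb₁ := hbu b₁ hb₁' (hS₁ hb₁)
    have eb₂ := hbu b₂ (by rw [e2.trans e1.symm] at hb₂'; exact hb₂') (hS₁ hb₂)
    rw [eb₁, eb₂]

lemma hard_class {A B C B₀ C₀ : Finset α} {T : Finset (Finset α)}
    (hTD : IsTD3 A B C T)
    (hB₀ : B₀ ⊆ B) (hC₀ : C₀ ⊆ C) (hcB₀ : B₀.card = 3) (hcC : C.card = 6) (hcC₀ : C₀.card = 3)
    {a : α} (ha : a ∈ A)
    (hstep : ∀ β ∈ T, a ∈ β → ∀ b ∈ β, b ∈ B₀ → ∀ c ∈ β, c ∈ C → c ∈ C \ C₀)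
    {β : Finset α} (hβ : β ∈ T) (haβ : a ∈ β) {b : α} (hbβ : b ∈ β) (hb : b ∈ B \ B₀)
    {c : α} (hcβ : c ∈ β) (hc : c ∈ C) : c ∈ C₀ := by
  classical
  by_contra hcc
  have hcC1 : c ∈ C \ C₀ := Finset.mem_sdiff.mpr ⟨hc, hcc⟩
  have hex : ∀ b' : α, ∃ c', b' ∈ B₀ → c' ∈ C \ C₀ ∧ ∃ γ ∈ T, a ∈ γ ∧ b' ∈ γ ∧ c' ∈ γ := by
    intro b'
    by_cases hb' : b' ∈ B₀
    · obtain ⟨γ, ⟨hγ, haγ, hb'γ⟩, _⟩ := hTD.2 a b' (Or.inl ⟨ha, hB₀ hb'⟩)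
      obtain ⟨c', hc'γ, hc'C, _⟩ := pt_spec (hTD.1 γ hγ).2.2.2
      exact ⟨c', fun _ => ⟨hstep γ hγ haγ b' hb'γ hb' c' hc'γ hc'C, γ, hγ, haγ, hb'γ, hc'γ⟩⟩
    · exact ⟨c, fun h => absurd h hb'⟩
  choose f hf using hex
  have hinj : Set.InjOn f B₀ := by
    intro b₁ hb₁ b₂ hb₂ heq
    rw [Finset.mem_coe] at hb₁ hb₂
    obtain ⟨hc₁, γ₁, hγ₁, ha₁, hb₁', hc₁'⟩ := hf b₁ hb₁
    obtain ⟨hc₂, γ₂, hγ₂, ha₂, hb₂', hc₂'⟩ := hf b₂ hb₂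
    obtain ⟨δ, _, hu⟩ := hTD.2 a (f b₁) (Or.inr (Or.inl ⟨ha, (Finset.mem_sdiff.mp hc₁).1⟩))
    have e1 := hu γ₁ ⟨hγ₁, ha₁, hc₁'⟩
    have e2 := hu γ₂ ⟨hγ₂, ha₂, by rw [heq]; exact hc₂'⟩
    obtain ⟨bb, _, _, hbu⟩ := pt_spec (hTD.1 γ₁ hγ₁).2.2.1
    have eb₁ := hbu b₁ hb₁' (hB₀ hb₁)
    have eb₂ := hbu b₂ (by rw [e2.trans e1.symm] at hb₂'; exact hb₂') (hB₀ hb₂)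
    rw [eb₁, eb₂]
  have himg : B₀.image f ⊆ C \ C₀ := by
    intro x hx
    obtain ⟨b', hb', rfl⟩ := Finset.mem_image.mp hx
    exact (hf b' hb').1
  have hCeq : B₀.image f = C \ C₀ := by
    apply Finset.eq_of_subset_of_card_le himg
    rw [Finset.card_sdiff_of_subset hC₀, hcC, hcC₀, Finset.card_image_of_injOn hinj, hcB₀]
  have hcmem : c ∈ B₀.image f := by rw [hCeq]; exact hcC1
  obtain ⟨b₀, hb₀, hfb₀⟩ := Finset.mem_image.mp hcmem
  obtain ⟨_, γ, hγ, haγ, hb₀γ, hcγ⟩ := hf b₀ hb₀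
  obtain ⟨δ, _, hu⟩ := hTD.2 a c (Or.inr (Or.inl ⟨ha, hc⟩))
  have e1 := hu β ⟨hβ, haβ, hcβ⟩
  have e2 := hu γ ⟨hγ, haγ, by rw [← hfb₀]; exact hcγ⟩
  obtain ⟨bb, _, _, hbu⟩ := pt_spec (hTD.1 β hβ).2.2.1
  have eb := hbu b hbβ (Finset.mem_sdiff.mp hb).1
  have eb₀ := hbu b₀ (by rw [e2.trans e1.symm] at hb₀γ; exact hb₀γ) (hB₀ hb₀)
  have : b ∈ B₀ := by rw [eb.trans eb₀.symm]; exact hb₀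
  exact (Finset.mem_sdiff.mp hb).2 this

lemma td3_filter_eq {A B A' B' C' : Finset α} {T T' : Finset (Finset α)}
    {C : Finset α}
    (hTD : IsTD3 A B C T) (hT' : T' ⊆ T) (hA' : A' ⊆ A) (hB' : B' ⊆ B)
    (hTD' : IsTD3 A' B' C' T') :
    T' = T.filter (fun β => (β ∩ A').Nonempty ∧ (β ∩ B').Nonempty) := by
  ext β
  simp only [Finset.mem_filter]
  constructor
  · intro hβ
    obtain ⟨_, h1, h2, _⟩ := hTD'.1 β hβ
    exact ⟨hT' hβ, Finset.card_pos.mp (by omega), Finset.card_pos.mp (by omega)⟩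
  · rintro ⟨hβ, ⟨x, hx⟩, ⟨y, hy⟩⟩
    rw [Finset.mem_inter] at hx hy
    obtain ⟨γ, ⟨hγ, hxγ, hyγ⟩, _⟩ := hTD'.2 x y (Or.inl ⟨hx.2, hy.2⟩)
    obtain ⟨δ, _, hu⟩ := hTD.2 x y (Or.inl ⟨hA' hx.2, hB' hy.2⟩)
    have h1 := hu β ⟨hβ, hx.1, hy.1⟩
    have h2 := hu γ ⟨hT' hγ, hxγ, hyγ⟩
    rw [h1, ← h2]
    exact hγ

lemma td3_ne {A B C X Y Z X' Y' Z' : Finset α} {T S S' : Finset (Finset α)}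
    (hTD : IsTD3 A B C T) (hS : S ⊆ T) (hS' : S' ⊆ T)
    (h1 : IsTD3 X Y Z S) (h2 : IsTD3 X' Y' Z' S')
    (hX : X ⊆ A) (hX' : X' ⊆ A) (hd : Disjoint X X')
    (hx : X.Nonempty) (hy : Y.Nonempty) : S ≠ S' := by
  obtain ⟨x, hxX⟩ := hx
  obtain ⟨y, hyY⟩ := hy
  obtain ⟨β, ⟨hβ, hxβ, hyβ⟩, _⟩ := h1.2 x y (Or.inl ⟨hxX, hyY⟩)
  intro he
  have hβ' : β ∈ S' := by rw [← he]; exact hβ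
  obtain ⟨x', hx'β, hx'X', _⟩ := pt_spec (h2.1 β hβ').2.1
  obtain ⟨aa, _, _, hau⟩ := pt_spec (hTD.1 β (hS hβ)).2.1
  have e1 := hau x hxβ (hX hxX)
  have e2 := hau x' hx'β (hX' hx'X')
  have : x ∈ X' := by rw [e1.trans e2.symm]; exact hx'X'
  exact Finset.disjoint_left.mp hd hxX this

lemma td3_restrict {A B C A' B' C' : Finset α} {T : Finset (Finset α)}
    (hTD : IsTD3 A B C T) (hA' : A' ⊆ A) (hB' : B' ⊆ B) (hC' : C' ⊆ C)
    (hab : ∀ β ∈ T, ∀ a ∈ β, a ∈ A' → ∀ b ∈ β, b ∈ B' → ∀ c ∈ β, c ∈ C → c ∈ C')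
    (hac : ∀ β ∈ T, ∀ a ∈ β, a ∈ A' → ∀ c ∈ β, c ∈ C' → ∀ b ∈ β, b ∈ B → b ∈ B')
    (hbc : ∀ β ∈ T, ∀ b ∈ β, b ∈ B' → ∀ c ∈ β, c ∈ C' → ∀ a ∈ β, a ∈ A → a ∈ A') :
    IsTD3 A' B' C' (T.filter fun β => (β ∩ A').Nonempty ∧ (β ∩ B').Nonempty) := by
  constructor
  · intro β hβ
    rw [Finset.mem_filter] at hβ
    obtain ⟨hβT, ⟨x, hx⟩, ⟨y, hy⟩⟩ := hβ
    rw [Finset.mem_inter] at hx hy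
    obtain ⟨hsub, hA1, hB1, hC1⟩ := hTD.1 β hβT
    obtain ⟨a, haβ, haA, hau⟩ := pt_spec hA1
    obtain ⟨b, hbβ, hbB, hbu⟩ := pt_spec hB1
    obtain ⟨c, hcβ, hcC, hcu⟩ := pt_spec hC1
    have haA' : a ∈ A' := by rw [← hau x hx.1 (hA' hx.2)]; exact hx.2
    have hbB' : b ∈ B' := by rw [← hbu y hy.1 (hB' hy.2)]; exact hy.2
    have hcC' : c ∈ C' := hab β hβT a haβ haA' b hbβ hbB' c hcβ hcC
    have singA : β ∩ A' = {a} := by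
      apply Finset.eq_singleton_iff_unique_mem.mpr
      refine ⟨Finset.mem_inter.mpr ⟨haβ, haA'⟩, fun z hz => ?_⟩
      rw [Finset.mem_inter] at hz
      exact hau z hz.1 (hA' hz.2)
    have singB : β ∩ B' = {b} := by
      apply Finset.eq_singleton_iff_unique_mem.mpr
      refine ⟨Finset.mem_inter.mpr ⟨hbβ, hbB'⟩, fun z hz => ?_⟩
      rw [Finset.mem_inter] at hz
      exact hbu z hz.1 (hB' hz.2)
    have singC : β ∩ C' = {c} := by
      apply Finset.eq_singleton_iff_unique_mem.mpr
      refine ⟨Finset.mem_inter.mpr ⟨hcβ, hcC'⟩, fun z hz => ?_⟩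
      rw [Finset.mem_inter] at hz
      exact hcu z hz.1 (hC' hz.2)
    refine ⟨?_, by rw [singA]; rfl, by rw [singB]; rfl, by rw [singC]; rfl⟩
    intro z hz
    rcases Finset.mem_union.mp (hsub hz) with h | h
    · rcases Finset.mem_union.mp h with h | h
      · exact Finset.mem_union_left _ (Finset.mem_union_left _ (by rw [hau z hz h]; exact haA'))
      · exact Finset.mem_union_left _ (Finset.mem_union_right _ (by rw [hbu z hz h]; exact hbB'))
    · exact Finset.mem_union_right _ (by rw [hcu z hz h]; exact hcC')
  · intro p q hpq
    rcases hpq with ⟨hp, hq⟩ | ⟨hp, hq⟩ | ⟨hp, hq⟩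
    · obtain ⟨β, ⟨hβ, hpβ, hqβ⟩, hu⟩ := hTD.2 p q (Or.inl ⟨hA' hp, hB' hq⟩)
      refine ⟨β, ⟨Finset.mem_filter.mpr ⟨hβ, ⟨p, Finset.mem_inter.mpr ⟨hpβ, hp⟩⟩,
        ⟨q, Finset.mem_inter.mpr ⟨hqβ, hq⟩⟩⟩, hpβ, hqβ⟩, ?_⟩
      rintro γ ⟨hγ, h1, h2⟩
      exact hu γ ⟨(Finset.mem_filter.mp hγ).1, h1, h2⟩
    · obtain ⟨β, ⟨hβ, hpβ, hqβ⟩, hu⟩ := hTD.2 p q (Or.inr (Or.inl ⟨hA' hp, hC' hq⟩))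
      obtain ⟨b, hbβ, hbB, _⟩ := pt_spec (hTD.1 β hβ).2.2.1
      have hbB' : b ∈ B' := hac β hβ p hpβ hp q hqβ hq b hbβ hbB
      refine ⟨β, ⟨Finset.mem_filter.mpr ⟨hβ, ⟨p, Finset.mem_inter.mpr ⟨hpβ, hp⟩⟩,
        ⟨b, Finset.mem_inter.mpr ⟨hbβ, hbB'⟩⟩⟩, hpβ, hqβ⟩, ?_⟩
      rintro γ ⟨hγ, h1, h2⟩
      exact hu γ ⟨(Finset.mem_filter.mp hγ).1, h1, h2⟩
    · obtain ⟨β, ⟨hβ, hpβ, hqβ⟩, hu⟩ := hTD.2 p q (Or.inr (Or.inr ⟨hB' hp, hC' hq⟩))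
      obtain ⟨a, haβ, haA, _⟩ := pt_spec (hTD.1 β hβ).2.1
      have haA' : a ∈ A' := hbc β hβ p hpβ hp q hqβ hq a haβ haA
      refine ⟨β, ⟨Finset.mem_filter.mpr ⟨hβ, ⟨a, Finset.mem_inter.mpr ⟨haβ, haA'⟩⟩,
        ⟨p, Finset.mem_inter.mpr ⟨hpβ, hp⟩⟩⟩, hpβ, hqβ⟩, ?_⟩
      rintro γ ⟨hγ, h1, h2⟩
      exact hu γ ⟨(Finset.mem_filter.mp hγ).1, h1, h2⟩

lemma td3_mono {A B C A₀ B₀ C₀ A' B' C' : Finset α} {T T' : Finset (Finset α)}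
    (hTD : IsTD3 A B C T) (hT' : T' ⊆ T) (hTD' : IsTD3 A' B' C' T')
    (hA₀ : A₀ ⊆ A) (hB₀ : B₀ ⊆ B) (hC₀ : C₀ ⊆ C)
    (hA' : A' ⊆ A) (hB' : B' ⊆ B) (hC' : C' ⊆ C)
    (hcB' : B'.card = 3)
    (h00 : ∀ β ∈ T, ∀ a ∈ β, a ∈ A₀ → ∀ b ∈ β, b ∈ B₀ → ∀ c ∈ β, c ∈ C → c ∈ C₀)
    (h01 : ∀ β ∈ T, ∀ a ∈ β, a ∈ A₀ → ∀ b ∈ β, b ∈ B \ B₀ → ∀ c ∈ β, c ∈ C → c ∈ C \ C₀)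
    (h10 : ∀ β ∈ T, ∀ a ∈ β, a ∈ A \ A₀ → ∀ b ∈ β, b ∈ B₀ → ∀ c ∈ β, c ∈ C → c ∈ C \ C₀)
    (h11 : ∀ β ∈ T, ∀ a ∈ β, a ∈ A \ A₀ → ∀ b ∈ β, b ∈ B \ B₀ → ∀ c ∈ β, c ∈ C → c ∈ C₀) :
    A' ⊆ A₀ ∨ A' ⊆ A \ A₀ := by
  by_contra hcon
  push_neg at hcon
  obtain ⟨h₀, h₁⟩ := hcon
  obtain ⟨a₀, ha₀A', ha₀⟩ := Finset.not_subset.mp h₀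
  obtain ⟨a₁, ha₁A', ha₁⟩ := Finset.not_subset.mp h₁
  have ha₀m : a₀ ∈ A \ A₀ := Finset.mem_sdiff.mpr ⟨hA' ha₀A', ha₀⟩
  have ha₁m : a₁ ∈ A₀ := by
    by_contra h
    exact ha₁ (Finset.mem_sdiff.mpr ⟨hA' ha₁A', h⟩)
  have le1 : (B' ∩ B₀).card ≤ (C' ∩ C₀).card := by
    apply card_le_via hTD (hA₀ ha₁m)
      (Finset.inter_subset_right.trans hB₀) (Finset.inter_subset_right.trans hC₀)
    intro b hb
    rw [Finset.mem_inter] at hb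
    obtain ⟨γ, ⟨hγ, haγ, hbγ⟩, _⟩ := hTD'.2 a₁ b (Or.inl ⟨ha₁A', hb.1⟩)
    obtain ⟨c, hcγ, hcC', _⟩ := pt_spec (hTD'.1 γ hγ).2.2.2
    have hcC₀ : c ∈ C₀ := h00 γ (hT' hγ) a₁ haγ ha₁m b hbγ hb.2 c hcγ (hC' hcC')
    exact ⟨c, Finset.mem_inter.mpr ⟨hcC', hcC₀⟩, γ, hT' hγ, haγ, hbγ, hcγ⟩
  have le2 : (C' ∩ C₀).card ≤ (B' ∩ (B \ B₀)).card := by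
    apply card_le_via hTD.swap23 (Finset.mem_sdiff.mp ha₀m).1
      (Finset.inter_subset_right.trans hC₀)
      (Finset.inter_subset_right.trans (Finset.sdiff_subset))
    intro c hc
    rw [Finset.mem_inter] at hc
    obtain ⟨γ, ⟨hγ, haγ, hcγ⟩, _⟩ := hTD'.2 a₀ c (Or.inr (Or.inl ⟨ha₀A', hc.1⟩))
    obtain ⟨b, hbγ, hbB', _⟩ := pt_spec (hTD'.1 γ hγ).2.2.1
    have hbm : b ∈ B \ B₀ := by
      by_cases hbb : b ∈ B₀
      · have := h10 γ (hT' hγ) a₀ haγ ha₀m b hbγ hbb c hcγ (hC₀ hc.2)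
        exact absurd hc.2 (Finset.mem_sdiff.mp this).2
      · exact Finset.mem_sdiff.mpr ⟨hB' hbB', hbb⟩
    exact ⟨b, Finset.mem_inter.mpr ⟨hbB', hbm⟩, γ, hT' hγ, haγ, hcγ, hbγ⟩
  have le3 : (B' ∩ (B \ B₀)).card ≤ (C' ∩ (C \ C₀)).card := by
    apply card_le_via hTD (hA₀ ha₁m)
      (Finset.inter_subset_right.trans (Finset.sdiff_subset))
      (Finset.inter_subset_right.trans (Finset.sdiff_subset))
    intro b hb
    rw [Finset.mem_inter] at hb
    obtain ⟨γ, ⟨hγ, haγ, hbγ⟩, _⟩ := hTD'.2 a₁ b (Or.inl ⟨ha₁A', hb.1⟩)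
    obtain ⟨c, hcγ, hcC', _⟩ := pt_spec (hTD'.1 γ hγ).2.2.2
    have hcm : c ∈ C \ C₀ := h01 γ (hT' hγ) a₁ haγ ha₁m b hbγ hb.2 c hcγ (hC' hcC')
    exact ⟨c, Finset.mem_inter.mpr ⟨hcC', hcm⟩, γ, hT' hγ, haγ, hbγ, hcγ⟩
  have le4 : (C' ∩ (C \ C₀)).card ≤ (B' ∩ B₀).card := by
    apply card_le_via hTD.swap23 (Finset.mem_sdiff.mp ha₀m).1
      (Finset.inter_subset_right.trans (Finset.sdiff_subset))
      (Finset.inter_subset_right.trans hB₀)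
    intro c hc
    rw [Finset.mem_inter] at hc
    obtain ⟨γ, ⟨hγ, haγ, hcγ⟩, _⟩ := hTD'.2 a₀ c (Or.inr (Or.inl ⟨ha₀A', hc.1⟩))
    obtain ⟨b, hbγ, hbB', _⟩ := pt_spec (hTD'.1 γ hγ).2.2.1
    have hbm : b ∈ B₀ := by
      by_cases hbb : b ∈ B₀
      · exact hbb
      · have hbm' : b ∈ B \ B₀ := Finset.mem_sdiff.mpr ⟨hB' hbB', hbb⟩
        have := h11 γ (hT' hγ) a₀ haγ ha₀m b hbγ hbm' c hcγ (Finset.mem_sdiff.mp hc.2).1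
        exact absurd this (Finset.mem_sdiff.mp hc.2).2
    exact ⟨b, Finset.mem_inter.mpr ⟨hbB', hbm⟩, γ, hT' hγ, haγ, hcγ, hbγ⟩
  have hsplit : (B' ∩ B₀).card + (B' ∩ (B \ B₀)).card = 3 := by
    have e : B' ∩ (B \ B₀) = B' \ B₀ := by
      ext x
      simp only [Finset.mem_inter, Finset.mem_sdiff]
      constructor
      · rintro ⟨h1, _, h3⟩; exact ⟨h1, h3⟩
      · rintro ⟨h1, h3⟩; exact ⟨h1, hB' h1, h3⟩
    rw [e, Finset.card_inter_add_card_sdiff, hcB']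
  omega

theorem td36_subtd33 (A B C : Finset α) (T T₀ : Finset (Finset α))
    (A₀ B₀ C₀ : Finset α)
    (hA : A.card = 6) (hB : B.card = 6) (hC : C.card = 6)
    (hAB : Disjoint A B) (hAC : Disjoint A C) (hBC : Disjoint B C)
    (hTD : IsTD3 A B C T)
    (hA₀ : A₀ ⊆ A) (hB₀ : B₀ ⊆ B) (hC₀ : C₀ ⊆ C)
    (hcA₀ : A₀.card = 3) (hcB₀ : B₀.card = 3) (hcC₀ : C₀.card = 3)
    (hT₀ : T₀ ⊆ T) (hTD₀ : IsTD3 A₀ B₀ C₀ T₀) :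
    ∃ T₁ T₂ T₃ : Finset (Finset α),
      T₁ ⊆ T ∧ T₂ ⊆ T ∧ T₃ ⊆ T ∧
      IsTD3 A₀ (B \ B₀) (C \ C₀) T₁ ∧
      IsTD3 (A \ A₀) B₀ (C \ C₀) T₂ ∧
      IsTD3 (A \ A₀) (B \ B₀) C₀ T₃ ∧
      T₀ ≠ T₁ ∧ T₀ ≠ T₂ ∧ T₀ ≠ T₃ ∧ T₁ ≠ T₂ ∧ T₁ ≠ T₃ ∧ T₂ ≠ T₃ ∧
      ∀ (T' : Finset (Finset α)) (A' B' C' : Finset α),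
        T' ⊆ T → A' ⊆ A → B' ⊆ B → C' ⊆ C →
        A'.card = 3 → B'.card = 3 → C'.card = 3 →
        IsTD3 A' B' C' T' → T' = T₀ ∨ T' = T₁ ∨ T' = T₂ ∨ T' = T₃ := by
  have cls1 : ∀ β ∈ T, ∀ a ∈ β, a ∈ A₀ → ∀ b ∈ β, b ∈ B₀ → ∀ c ∈ β, c ∈ C → c ∈ C₀ :=
    fun β hβ a haβ ha b hbβ hb c hcβ hc =>
      sub_block_third hTD hA₀ hB₀ hC₀ hT₀ hTD₀ hβ haβ ha hbβ hb hcβ hc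
  have cls2 : ∀ β ∈ T, ∀ a ∈ β, a ∈ A₀ → ∀ c ∈ β, c ∈ C₀ → ∀ b ∈ β, b ∈ B → b ∈ B₀ :=
    fun β hβ a haβ ha c hcβ hc b hbβ hb =>
      sub_block_third hTD.swap23 hA₀ hC₀ hB₀ hT₀ hTD₀.swap23 hβ haβ ha hcβ hc hbβ hb
  have cls3 : ∀ β ∈ T, ∀ b ∈ β, b ∈ B₀ → ∀ c ∈ β, c ∈ C₀ → ∀ a ∈ β, a ∈ A → a ∈ A₀ :=
    fun β hβ b hbβ hb c hcβ hc a haβ ha =>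
      sub_block_third hTD.swap12.swap23 hB₀ hC₀ hA₀ hT₀ hTD₀.swap12.swap23 hβ hbβ hb hcβ hc haβ ha
  have cls4 : ∀ β ∈ T, ∀ a ∈ β, a ∈ A₀ → ∀ b ∈ β, b ∈ B \ B₀ → ∀ c ∈ β, c ∈ C → c ∈ C \ C₀ :=
    fun β hβ a haβ ha b hbβ hb c hcβ hc =>
      Finset.mem_sdiff.mpr ⟨hc, fun h => (Finset.mem_sdiff.mp hb).2
        (cls2 β hβ a haβ ha c hcβ h b hbβ (Finset.mem_sdiff.mp hb).1)⟩
  have cls5 : ∀ β ∈ T, ∀ a ∈ β, a ∈ A \ A₀ → ∀ b ∈ β, b ∈ B₀ → ∀ c ∈ β, c ∈ C → c ∈ C \ C₀ :=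
    fun β hβ a haβ ha b hbβ hb c hcβ hc =>
      Finset.mem_sdiff.mpr ⟨hc, fun h => (Finset.mem_sdiff.mp ha).2
        (cls3 β hβ b hbβ hb c hcβ h a haβ (Finset.mem_sdiff.mp ha).1)⟩
  have cls6 : ∀ β ∈ T, ∀ a ∈ β, a ∈ A \ A₀ → ∀ b ∈ β, b ∈ B \ B₀ → ∀ c ∈ β, c ∈ C → c ∈ C₀ :=
    fun β hβ a haβ ha b hbβ hb c hcβ hc =>
      hard_class hTD hB₀ hC₀ hcB₀ hC hcC₀ (Finset.mem_sdiff.mp ha).1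
        (fun β' hβ' haβ' b' hb'β hb' c' hc'β hc' => cls5 β' hβ' a haβ' ha b' hb'β hb' c' hc'β hc')
        hβ haβ hbβ hb hcβ hc
  have cls7 : ∀ β ∈ T, ∀ a ∈ β, a ∈ A₀ → ∀ c ∈ β, c ∈ C \ C₀ → ∀ b ∈ β, b ∈ B → b ∈ B \ B₀ :=
    fun β hβ a haβ ha c hcβ hc b hbβ hb =>
      Finset.mem_sdiff.mpr ⟨hb, fun h => (Finset.mem_sdiff.mp hc).2
        (cls1 β hβ a haβ ha b hbβ h c hcβ (Finset.mem_sdiff.mp hc).1)⟩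
  have cls8 : ∀ β ∈ T, ∀ a ∈ β, a ∈ A \ A₀ → ∀ c ∈ β, c ∈ C₀ → ∀ b ∈ β, b ∈ B → b ∈ B \ B₀ :=
    fun β hβ a haβ ha c hcβ hc b hbβ hb =>
      Finset.mem_sdiff.mpr ⟨hb, fun h =>
        (Finset.mem_sdiff.mp (cls5 β hβ a haβ ha b hbβ h c hcβ (hC₀ hc))).2 hc⟩
  have cls9 : ∀ β ∈ T, ∀ a ∈ β, a ∈ A \ A₀ → ∀ c ∈ β, c ∈ C \ C₀ → ∀ b ∈ β, b ∈ B → b ∈ B₀ := by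
    intro β hβ a haβ ha c hcβ hc b hbβ hb
    by_contra h
    exact (Finset.mem_sdiff.mp hc).2 (cls6 β hβ a haβ ha b hbβ
      (Finset.mem_sdiff.mpr ⟨hb, h⟩) c hcβ (Finset.mem_sdiff.mp hc).1)
  have cls10 : ∀ β ∈ T, ∀ b ∈ β, b ∈ B \ B₀ → ∀ c ∈ β, c ∈ C \ C₀ → ∀ a ∈ β, a ∈ A → a ∈ A₀ := by
    intro β hβ b hbβ hb c hcβ hc a haβ ha
    by_contra h
    exact (Finset.mem_sdiff.mp hc).2 (cls6 β hβ a haβ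
      (Finset.mem_sdiff.mpr ⟨ha, h⟩) b hbβ hb c hcβ (Finset.mem_sdiff.mp hc).1)
  have cls11 : ∀ β ∈ T, ∀ b ∈ β, b ∈ B₀ → ∀ c ∈ β, c ∈ C \ C₀ → ∀ a ∈ β, a ∈ A → a ∈ A \ A₀ :=
    fun β hβ b hbβ hb c hcβ hc a haβ ha =>
      Finset.mem_sdiff.mpr ⟨ha, fun h => (Finset.mem_sdiff.mp hc).2
        (cls1 β hβ a haβ h b hbβ hb c hcβ (Finset.mem_sdiff.mp hc).1)⟩
  have cls12 : ∀ β ∈ T, ∀ b ∈ β, b ∈ B \ B₀ → ∀ c ∈ β, c ∈ C₀ → ∀ a ∈ β, a ∈ A → a ∈ A \ A₀ :=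
    fun β hβ b hbβ hb c hcβ hc a haβ ha =>
      Finset.mem_sdiff.mpr ⟨ha, fun h =>
        (Finset.mem_sdiff.mp (cls4 β hβ a haβ h b hbβ hb c hcβ (hC₀ hc))).2 hc⟩
  -- the three new sub-designs
  have hTD₁ : IsTD3 A₀ (B \ B₀) (C \ C₀)
      (T.filter fun β => (β ∩ A₀).Nonempty ∧ (β ∩ (B \ B₀)).Nonempty) :=
    td3_restrict hTD hA₀ Finset.sdiff_subset Finset.sdiff_subset cls4 cls7 cls10
  have hTD₂ : IsTD3 (A \ A₀) B₀ (C \ C₀)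
      (T.filter fun β => (β ∩ (A \ A₀)).Nonempty ∧ (β ∩ B₀).Nonempty) :=
    td3_restrict hTD Finset.sdiff_subset hB₀ Finset.sdiff_subset cls5 cls9 cls11
  have hTD₃ : IsTD3 (A \ A₀) (B \ B₀) C₀
      (T.filter fun β => (β ∩ (A \ A₀)).Nonempty ∧ (β ∩ (B \ B₀)).Nonempty) :=
    td3_restrict hTD Finset.sdiff_subset Finset.sdiff_subset hC₀ cls6 cls8 cls12
  have hA₀ne : A₀.Nonempty := Finset.card_pos.mp (by omega)
  have hB₀ne : B₀.Nonempty := Finset.card_pos.mp (by omega)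
  have hcA₁ : (A \ A₀).card = 3 := by rw [Finset.card_sdiff_of_subset hA₀, hA, hcA₀]
  have hcB₁ : (B \ B₀).card = 3 := by rw [Finset.card_sdiff_of_subset hB₀, hB, hcB₀]
  have hA₁ne : (A \ A₀).Nonempty := Finset.card_pos.mp (by omega)
  have hB₁ne : (B \ B₀).Nonempty := Finset.card_pos.mp (by omega)
  have hT₁sub := Finset.filter_subset
    (fun β => (β ∩ A₀).Nonempty ∧ (β ∩ (B \ B₀)).Nonempty) T
  have hT₂sub := Finset.filter_subset
    (fun β => (β ∩ (A \ A₀)).Nonempty ∧ (β ∩ B₀).Nonempty) T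
  have hT₃sub := Finset.filter_subset
    (fun β => (β ∩ (A \ A₀)).Nonempty ∧ (β ∩ (B \ B₀)).Nonempty) T
  have ne01 := td3_ne hTD.swap12 hT₀ hT₁sub hTD₀.swap12 hTD₁.swap12 hB₀
    Finset.sdiff_subset disjoint_sdiff_self_right hB₀ne hA₀ne
  have ne02 := td3_ne hTD hT₀ hT₂sub hTD₀ hTD₂ hA₀
    Finset.sdiff_subset disjoint_sdiff_self_right hA₀ne hB₀ne
  have ne03 := td3_ne hTD hT₀ hT₃sub hTD₀ hTD₃ hA₀
    Finset.sdiff_subset disjoint_sdiff_self_right hA₀ne hB₀ne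
  have ne12 := td3_ne hTD hT₁sub hT₂sub hTD₁ hTD₂ hA₀
    Finset.sdiff_subset disjoint_sdiff_self_right hA₀ne hB₁ne
  have ne13 := td3_ne hTD hT₁sub hT₃sub hTD₁ hTD₃ hA₀
    Finset.sdiff_subset disjoint_sdiff_self_right hA₀ne hB₁ne
  have ne23 := td3_ne hTD.swap12 hT₂sub hT₃sub hTD₂.swap12 hTD₃.swap12 hB₀
    Finset.sdiff_subset disjoint_sdiff_self_right hB₀ne hA₁ne
  have T₀eq : T₀ = T.filter (fun β => (β ∩ A₀).Nonempty ∧ (β ∩ B₀).Nonempty) :=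
    td3_filter_eq hTD hT₀ hA₀ hB₀ hTD₀
  refine ⟨_, _, _, hT₁sub, hT₂sub, hT₃sub, hTD₁, hTD₂, hTD₃,
    ne01, ne02, ne03, ne12, ne13, ne23, ?_⟩
  intro T' A' B' C' hT' hA'A hB'B hC'C hcA' hcB' hcC' hTD'
  have monoA : A' ⊆ A₀ ∨ A' ⊆ A \ A₀ :=
    td3_mono hTD hT' hTD' hA₀ hB₀ hC₀ hA'A hB'B hC'C hcB' cls1 cls4 cls5 cls6
  have monoB : B' ⊆ B₀ ∨ B' ⊆ B \ B₀ :=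
    td3_mono hTD.swap12 hT' hTD'.swap12 hB₀ hA₀ hC₀ hB'B hA'A hC'C hcA'
      (fun β hβ b hbβ hb a haβ ha => cls1 β hβ a haβ ha b hbβ hb)
      (fun β hβ b hbβ hb a haβ ha => cls5 β hβ a haβ ha b hbβ hb)
      (fun β hβ b hbβ hb a haβ ha => cls4 β hβ a haβ ha b hbβ hb)
      (fun β hβ b hbβ hb a haβ ha => cls6 β hβ a haβ ha b hbβ hb)
  have T'eq : T' = T.filter (fun β => (β ∩ A').Nonempty ∧ (β ∩ B').Nonempty) :=
    td3_filter_eq hTD hT' hA'A hB'B hTD'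
  have eqA : A' = A₀ ∨ A' = A \ A₀ := by
    rcases monoA with h | h
    · exact Or.inl (Finset.eq_of_subset_of_card_le h (by omega))
    · exact Or.inr (Finset.eq_of_subset_of_card_le h (by omega))
  have eqB : B' = B₀ ∨ B' = B \ B₀ := by
    rcases monoB with h | h
    · exact Or.inl (Finset.eq_of_subset_of_card_le h (by omega))
    · exact Or.inr (Finset.eq_of_subset_of_card_le h (by omega))
  rcases eqA with rfl' | rfl' <;> rcases eqB with rfl'' | rfl'' <;>
    rw [rfl', rfl''] at T'eq
  · exact Or.inl (T'eq.trans T₀eq.symm)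
  · exact Or.inr (Or.inl T'eq)
  · exact Or.inr (Or.inr (Or.inl T'eq))
  · exact Or.inr (Or.inr (Or.inr T'eq))
end

section
/- If an STS(21) has a sub-TD(3,6) (equivalently, a flower {A, B, C, D}) and exactly one sub-STS(9), then it is not resolvable. -/
variable {α : Type*} [DecidableEq α]

/-- `P` is a parallel class of `(S, Bl)`: a set of blocks partitioning `S`. -/
def IsParallelClass (S : Finset α) (Bl P : Finset (Finset α)) : Prop :=
  P ⊆ Bl ∧ ∀ p ∈ S, ∃! b, b ∈ P ∧ p ∈ b

/-- `(S, Bl)` is resolvable: `Bl` can be partitioned into parallel classes. -/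
def IsResolvable (S : Finset α) (Bl : Finset (Finset α)) : Prop :=
  ∃ classes : Finset (Finset (Finset α)),
    (∀ P ∈ classes, IsParallelClass S Bl P) ∧
    ∀ b ∈ Bl, ∃! P, P ∈ classes ∧ b ∈ P

set_option linter.unusedSectionVars false
set_option linter.unusedVariables false

section Aux
variable {S : Finset α} {Bl : Finset (Finset α)}

lemma sts_block_eq (h : IsSTS S Bl) {b c : Finset α} (hb : b ∈ Bl) (hc : c ∈ Bl)
    {p q : α} (hpq : p ≠ q) (hpS : p ∈ S) (hqS : q ∈ S)
    (hpb : p ∈ b) (hqb : q ∈ b) (hpc : p ∈ c) (hqc : q ∈ c) : b = c := by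
  obtain ⟨u, -, huniq⟩ := h.2 p hpS q hqS hpq
  rw [huniq b ⟨hb, hpb, hqb⟩, huniq c ⟨hc, hpc, hqc⟩]

lemma localize_sub (hSTS : IsSTS S Bl) {W : Finset α} (hWS : W ⊆ S)
    {CW : Finset (Finset α)} (hCW : IsSTS W CW) (hsub : CW ⊆ Bl)
    {b : Finset α} {p q : α} (hb : b ∈ Bl) (hpq : p ≠ q) (hp : p ∈ W) (hq : q ∈ W)
    (hpb : p ∈ b) (hqb : q ∈ b) : b ⊆ W := by
  obtain ⟨c, ⟨hc, hpc, hqc⟩, -⟩ := hCW.2 p hp q hq hpq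
  have hbc := sts_block_eq hSTS hb (hsub hc) hpq (hWS hp) (hWS hq) hpb hqb hpc hqc
  exact hbc ▸ (hCW.1 c hc).1

lemma localize_almost (hSTS : IsSTS S Bl) {W D₀ : Finset α} (hWS : W ⊆ S)
    {C1 : Finset (Finset α)} (hC1 : IsAlmostSubSTS Bl W C1 D₀)
    {b : Finset α} {p q : α} (hb : b ∈ Bl) (hpq : p ≠ q) (hp : p ∈ W) (hq : q ∈ W)
    (hpb : p ∈ b) (hqb : q ∈ b) (hpD : p ∉ D₀) : b ∈ C1 ∧ b ⊆ W := by
  obtain ⟨hsub, -, hCW⟩ := hC1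
  obtain ⟨c, ⟨hc, hpc, hqc⟩, -⟩ := hCW.2 p hp q hq hpq
  rcases Finset.mem_insert.mp hc with h | h
  · exact absurd (h ▸ hpc) hpD
  · have hbc := sts_block_eq hSTS hb (hsub h) hpq (hWS hp) (hWS hq) hpb hqb hpc hqc
    exact ⟨hbc ▸ h, hbc ▸ (hCW.1 c hc).1⟩

lemma parclass_sum {P : Finset (Finset α)} (hP : IsParallelClass S Bl P)
    {W : Finset α} (hW : W ⊆ S) : ∑ b ∈ P, (W ∩ b).card = W.card := by
  calc ∑ b ∈ P, (W ∩ b).card = ∑ b ∈ P, ∑ p ∈ W, if p ∈ b then 1 else 0 := by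
        refine Finset.sum_congr rfl fun b _ => ?_
        rw [← Finset.filter_mem_eq_inter, Finset.card_filter]
    _ = ∑ p ∈ W, ∑ b ∈ P, if p ∈ b then 1 else 0 := Finset.sum_comm
    _ = ∑ p ∈ W, 1 := by
        refine Finset.sum_congr rfl fun p hp => ?_
        rw [← Finset.card_filter, Finset.card_eq_one]
        obtain ⟨b, ⟨hbP, hpb⟩, huniq⟩ := hP.2 p (hW hp)
        refine ⟨b, ?_⟩
        ext c
        simp only [Finset.mem_filter, Finset.mem_singleton]
        exact ⟨fun ⟨h1, h2⟩ => huniq c ⟨h1, h2⟩, fun h => h ▸ ⟨hbP, hpb⟩⟩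
    _ = W.card := by simp

lemma card_inter_four {X Y Z D b : Finset α} (hb : b ⊆ X ∪ Y ∪ Z ∪ D)
    (dXY : Disjoint X Y) (dXZ : Disjoint X Z) (dXD : Disjoint X D)
    (dYZ : Disjoint Y Z) (dYD : Disjoint Y D) (dZD : Disjoint Z D) :
    (X ∩ b).card + (Y ∩ b).card + (Z ∩ b).card + (D ∩ b).card = b.card := by
  have key : (X ∩ b) ∪ (Y ∩ b) ∪ (Z ∩ b) ∪ (D ∩ b) = b := by
    rw [← Finset.union_inter_distrib_right, ← Finset.union_inter_distrib_right,
        ← Finset.union_inter_distrib_right]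
    exact Finset.inter_eq_right.mpr hb
  have d1 : Disjoint (X ∩ b) (Y ∩ b) := dXY.mono Finset.inter_subset_left Finset.inter_subset_left
  have d2 : Disjoint (X ∩ b ∪ Y ∩ b) (Z ∩ b) := Finset.disjoint_union_left.mpr
    ⟨dXZ.mono Finset.inter_subset_left Finset.inter_subset_left,
     dYZ.mono Finset.inter_subset_left Finset.inter_subset_left⟩
  have d3 : Disjoint (X ∩ b ∪ Y ∩ b ∪ Z ∩ b) (D ∩ b) := Finset.disjoint_union_left.mpr
    ⟨Finset.disjoint_union_left.mpr
      ⟨dXD.mono Finset.inter_subset_left Finset.inter_subset_left,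
       dYD.mono Finset.inter_subset_left Finset.inter_subset_left⟩,
     dZD.mono Finset.inter_subset_left Finset.inter_subset_left⟩
  have h := congrArg Finset.card key
  rw [Finset.card_union_of_disjoint d3, Finset.card_union_of_disjoint d2,
      Finset.card_union_of_disjoint d1] at h
  exact h

end Aux

section Inside
variable {S : Finset α} {Bl : Finset (Finset α)}

lemma inside_blocks_disjoint {Y D : Finset α} (hSTS : IsSTS S Bl)
    (hYS : Y ∪ D ⊆ S) (dYD : Disjoint Y D) (hY : Y.card = 6) (hD : D.card = 3)
    {C1 : Finset (Finset α)} (hC1 : IsAlmostSubSTS Bl (Y ∪ D) C1 D)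
    {e e' : Finset α} (he : e ∈ Bl) (he' : e' ∈ Bl) (heY : e ⊆ Y) (he'Y : e' ⊆ Y)
    (hne : e ≠ e') : Disjoint e e' := by
  rw [Finset.disjoint_left]
  intro p hpe hpe'
  obtain ⟨hsub, hDC, hCW⟩ := hC1
  have hpY : p ∈ Y := heY hpe
  have hpW : p ∈ Y ∪ D := Finset.mem_union_left _ hpY
  have hpD : p ∉ D := fun h => Finset.disjoint_left.mp dYD hpY h
  have hbeta : ∀ d : {d // d ∈ D}, ∃! c, c ∈ insert D C1 ∧ p ∈ c ∧ d.1 ∈ c := fun d =>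
    hCW.2 p hpW d.1 (Finset.mem_union_right _ d.2) (fun h => hpD (h ▸ d.2))
  set β : {d // d ∈ D} → Finset α :=
    fun d => Finset.choose (fun c => p ∈ c ∧ d.1 ∈ c) (insert D C1) (hbeta d) with hβ
  have hβmem : ∀ d, β d ∈ insert D C1 := fun d => Finset.choose_mem _ _ _
  have hβp : ∀ d, p ∈ β d := fun d => (Finset.choose_property (fun c => p ∈ c ∧ d.1 ∈ c) _ _).1
  have hβd : ∀ d, d.1 ∈ β d := fun d => (Finset.choose_property (fun c => p ∈ c ∧ d.1 ∈ c) _ _).2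
  have hβC1 : ∀ d, β d ∈ C1 := by
    intro d
    rcases Finset.mem_insert.mp (hβmem d) with h | h
    · exact absurd (h ▸ hβp d) hpD
    · exact h
  have hβBl : ∀ d, β d ∈ Bl := fun d => hsub (hβC1 d)
  have hβW : ∀ d, β d ⊆ Y ∪ D := fun d => (hCW.1 _ (hβmem d)).1
  have hβinj : Function.Injective β := by
    intro d d' h
    by_contra hne'
    have hdd : d.1 ≠ d'.1 := fun hh => hne' (Subtype.ext hh)
    have h1 : d.1 ∈ β d := hβd d
    have h2 : d'.1 ∈ β d := h ▸ hβd d'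
    obtain ⟨c, -, huniq⟩ := hCW.2 d.1 (Finset.mem_union_right _ d.2) d'.1
      (Finset.mem_union_right _ d'.2) hdd
    have hβD : β d = D := by
      rw [huniq (β d) ⟨hβmem d, h1, h2⟩, huniq D ⟨Finset.mem_insert_self _ _, d.2, d'.2⟩]
    exact hpD (hβD ▸ hβp d)
  set T : Finset (Finset α) := insert e (insert e' (Finset.image β D.attach)) with hT
  have himg : ∀ b ∈ Finset.image β D.attach, ∃ d : {d // d ∈ D}, β d = b := by
    intro b hb
    obtain ⟨d, -, hd⟩ := Finset.mem_image.mp hb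
    exact ⟨d, hd⟩
  have hTBl : ∀ b ∈ T, b ∈ Bl := by
    intro b hb
    rcases Finset.mem_insert.mp hb with h | h
    · exact h ▸ he
    rcases Finset.mem_insert.mp h with h | h
    · exact h ▸ he'
    · obtain ⟨d, hd⟩ := himg b h; exact hd ▸ hβBl d
  have hTp : ∀ b ∈ T, p ∈ b := by
    intro b hb
    rcases Finset.mem_insert.mp hb with h | h
    · exact h ▸ hpe
    rcases Finset.mem_insert.mp h with h | h
    · exact h ▸ hpe'
    · obtain ⟨d, hd⟩ := himg b h; exact hd ▸ hβp d
  have hTW : ∀ b ∈ T, b ⊆ Y ∪ D := by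
    intro b hb
    rcases Finset.mem_insert.mp hb with h | h
    · exact h ▸ heY.trans Finset.subset_union_left
    rcases Finset.mem_insert.mp h with h | h
    · exact h ▸ he'Y.trans Finset.subset_union_left
    · obtain ⟨d, hd⟩ := himg b h; exact hd ▸ hβW d
  -- card T = 5
  have heimg : ∀ (f : Finset α), f ⊆ Y → f ∉ Finset.image β D.attach := by
    intro f hf hmem
    obtain ⟨d, hd⟩ := himg f hmem
    exact Finset.disjoint_left.mp dYD (hf (hd ▸ hβd d)) d.2
  have hcardimg : (Finset.image β D.attach).card = 3 := by
    rw [Finset.card_image_of_injective _ hβinj, Finset.card_attach, hD]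
  have hTcard : T.card = 5 := by
    rw [hT, Finset.card_insert_of_notMem, Finset.card_insert_of_notMem (heimg e' he'Y),
        hcardimg]
    intro h
    rcases Finset.mem_insert.mp h with h | h
    · exact hne h
    · exact heimg e heY h
  -- biUnion of erased blocks
  have hdisj : ∀ b ∈ T, ∀ c ∈ T, b ≠ c → Disjoint (b.erase p) (c.erase p) := by
    intro b hb c hc hbc
    rw [Finset.disjoint_left]
    intro x hxb hxc
    have hxp : x ≠ p := Finset.ne_of_mem_erase hxb
    have hxS : x ∈ S := hYS (hTW b hb (Finset.mem_of_mem_erase hxb))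
    have hpS : p ∈ S := hYS hpW
    exact hbc (sts_block_eq hSTS (hTBl b hb) (hTBl c hc) hxp hxS hpS
      (Finset.mem_of_mem_erase hxb) (hTp b hb) (Finset.mem_of_mem_erase hxc) (hTp c hc))
  have hbicard : (T.biUnion (fun b => b.erase p)).card = 10 := by
    rw [Finset.card_biUnion hdisj]
    have : ∀ b ∈ T, (b.erase p).card = 2 := by
      intro b hb
      rw [Finset.card_erase_of_mem (hTp b hb), (hSTS.1 b (hTBl b hb)).2]
    rw [Finset.sum_congr rfl this, Finset.sum_const, hTcard]; rfl
  have hbisub : T.biUnion (fun b => b.erase p) ⊆ (Y ∪ D).erase p := by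
    intro x hx
    obtain ⟨b, hb, hxb⟩ := Finset.mem_biUnion.mp hx
    exact Finset.mem_erase.mpr ⟨Finset.ne_of_mem_erase hxb,
      hTW b hb (Finset.mem_of_mem_erase hxb)⟩
  have hle := Finset.card_le_card hbisub
  rw [hbicard, Finset.card_erase_of_mem hpW,
      Finset.card_union_of_disjoint dYD, hY, hD] at hle
  omega

end Inside

section ClassInside
variable {S : Finset α} {Bl : Finset (Finset α)}

lemma class_has_inside {X Y Z D : Finset α} (hSTS : IsSTS S Bl)
    (hSeq : X ∪ Y ∪ Z ∪ D = S)
    (dXY : Disjoint X Y) (dXZ : Disjoint X Z) (dXD : Disjoint X D)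
    (dYZ : Disjoint Y Z) (dYD : Disjoint Y D) (dZD : Disjoint Z D)
    (hX : X.card = 6) (hY : Y.card = 6) (hD : D.card = 3)
    {C0 C1 C2 : Finset (Finset α)} (hC0sub : C0 ⊆ Bl) (hC0 : IsSTS (X ∪ D) C0)
    (hC1 : IsAlmostSubSTS Bl (Y ∪ D) C1 D) (hC2 : IsAlmostSubSTS Bl (Z ∪ D) C2 D)
    {P : Finset (Finset α)} (hP : IsParallelClass S Bl P)
    {bb : Finset α} (hbbP : bb ∈ P) (hbbX : bb ⊆ X ∪ D)
    {dk : α} (hdk : dk ∈ D) (hdkbb : dk ∉ bb) (hbbD : D ∩ bb = D.erase dk) :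
    ∃ e ∈ P, e ⊆ Y := by
  by_contra hno
  push_neg at hno
  have hXS : X ⊆ S := hSeq ▸ (Finset.subset_union_left.trans Finset.subset_union_left).trans
    Finset.subset_union_left
  have hYSub : Y ⊆ S := hSeq ▸ (Finset.subset_union_right.trans Finset.subset_union_left).trans
    Finset.subset_union_left
  have hZS : Z ⊆ S := hSeq ▸ Finset.subset_union_right.trans Finset.subset_union_left
  have hDS : D ⊆ S := hSeq ▸ Finset.subset_union_right
  have hXDS : X ∪ D ⊆ S := Finset.union_subset hXS hDS
  have hYDS : Y ∪ D ⊆ S := Finset.union_subset hYSub hDS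
  have hZDS : Z ∪ D ⊆ S := Finset.union_subset hZS hDS
  have hblk : ∀ b ∈ P, b ∈ Bl := fun b hb => hP.1 hb
  have hcard3 : ∀ b ∈ P, b.card = 3 := fun b hb => (hSTS.1 b (hblk b hb)).2
  have hbS : ∀ b ∈ P, b ⊆ S := fun b hb => (hSTS.1 b (hblk b hb)).1
  -- the block b' of P containing dk
  obtain ⟨b', ⟨hb'P, hdkb'⟩, hb'uniq⟩ := hP.2 dk (hDS hdk)
  have hbbne : bb ≠ b' := fun h => hdkbb (h ▸ hdkb')
  -- basic counts for bb
  have hYbb : (Y ∩ bb).card = 0 := by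
    rw [Finset.card_eq_zero]
    apply Finset.eq_empty_of_forall_notMem
    intro a ha
    have haY := Finset.mem_of_mem_inter_left ha
    have haXD := hbbX (Finset.mem_of_mem_inter_right ha)
    rcases Finset.mem_union.mp haXD with h | h
    · exact Finset.disjoint_left.mp dXY h haY
    · exact Finset.disjoint_left.mp dYD haY h
  have hDbbcard : (D ∩ bb).card = 2 := by
    rw [hbbD, Finset.card_erase_of_mem hdk, hD]
  have hXbb : (X ∩ bb).card = 1 := by
    have hsplit : (X ∩ bb) ∪ (D ∩ bb) = bb := by
      rw [← Finset.union_inter_distrib_right]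
      exact Finset.inter_eq_right.mpr hbbX
    have hdisj : Disjoint (X ∩ bb) (D ∩ bb) :=
      dXD.mono Finset.inter_subset_left Finset.inter_subset_left
    have h := congrArg Finset.card hsplit
    rw [Finset.card_union_of_disjoint hdisj, hDbbcard, hcard3 bb hbbP] at h
    omega
  -- classification of b'
  have hb'cases : ((Y ∩ b').card = 2 ∧ (X ∩ b').card = 0) ∨ (Y ∩ b').card = 0 := by
    rcases Finset.eq_empty_or_nonempty (Y ∩ b') with h | ⟨q, hq⟩
    · right; rw [h]; rfl
    · left
      have hqY := Finset.mem_of_mem_inter_left hq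
      have hqb' := Finset.mem_of_mem_inter_right hq
      have hqdk : q ≠ dk := fun h => Finset.disjoint_left.mp dYD hqY (h ▸ hdk)
      have hqD : q ∉ D := fun h => Finset.disjoint_left.mp dYD hqY h
      obtain ⟨-, hb'W⟩ := localize_almost hSTS hYDS hC1 (hblk b' hb'P) hqdk
        (Finset.mem_union_left _ hqY) (Finset.mem_union_right _ hdk) hqb' hdkb' hqD
      have hXb' : (X ∩ b').card = 0 := by
        rw [Finset.card_eq_zero]
        apply Finset.eq_empty_of_forall_notMem
        intro a ha
        have haX := Finset.mem_of_mem_inter_left ha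
        rcases Finset.mem_union.mp (hb'W (Finset.mem_of_mem_inter_right ha)) with h | h
        · exact Finset.disjoint_left.mp dXY haX h
        · exact Finset.disjoint_left.mp dXD haX h
      have hDb' : D ∩ b' = {dk} := by
        ext d
        simp only [Finset.mem_inter, Finset.mem_singleton]
        constructor
        · rintro ⟨hdD, hdb'⟩
          by_contra hddk
          have hb'XD : b' ⊆ X ∪ D := localize_sub hSTS hXDS hC0 hC0sub (hblk b' hb'P) hddk
            (Finset.mem_union_right _ hdD) (Finset.mem_union_right _ hdk) hdb' hdkb'
          rcases Finset.mem_union.mp (hb'XD hqb') with h | h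
          · exact Finset.disjoint_left.mp dXY h hqY
          · exact hqD h
        · rintro rfl; exact ⟨hdk, hdkb'⟩
      have hsplit : (Y ∩ b') ∪ (D ∩ b') = b' := by
        rw [← Finset.union_inter_distrib_right]
        exact Finset.inter_eq_right.mpr hb'W
      have hdisj : Disjoint (Y ∩ b') (D ∩ b') :=
        dYD.mono Finset.inter_subset_left Finset.inter_subset_left
      have h := congrArg Finset.card hsplit
      rw [Finset.card_union_of_disjoint hdisj, hDb', Finset.card_singleton,
        hcard3 b' hb'P] at h
      exact ⟨by omega, hXb'⟩
  -- classification of the other blocks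
  set O : Finset (Finset α) := (P.erase bb).erase b' with hO
  have hOP : ∀ b ∈ O, b ∈ P := fun b hb =>
    Finset.mem_of_mem_erase (Finset.mem_of_mem_erase hb)
  have hOclass : ∀ b ∈ O,
      (X ∩ b).card = (Y ∩ b).card + 3 * (if (X ∩ b).card = 3 then 1 else 0) := by
    intro b hbO
    have hbP : b ∈ P := hOP b hbO
    have hbBl := hblk b hbP
    have hbnebb : b ≠ bb := Finset.ne_of_mem_erase (Finset.mem_of_mem_erase hbO)
    have hbneb' : b ≠ b' := Finset.ne_of_mem_erase hbO
    -- D ∩ b = ∅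
    have hDb : D ∩ b = ∅ := by
      apply Finset.eq_empty_of_forall_notMem
      intro d hd
      have hdD := Finset.mem_of_mem_inter_left hd
      have hdb := Finset.mem_of_mem_inter_right hd
      by_cases hddk : d = dk
      · exact hbneb' (hb'uniq b ⟨hbP, hddk ▸ hdb⟩)
      · have hdbb : d ∈ bb := Finset.mem_of_mem_inter_right
          (hbbD ▸ Finset.mem_erase.mpr ⟨hddk, hdD⟩ : d ∈ D ∩ bb)
        obtain ⟨c, -, hcu⟩ := hP.2 d (hDS hdD)
        exact hbnebb ((hcu b ⟨hbP, hdb⟩).trans (hcu bb ⟨hbbP, hdbb⟩).symm)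
    have hDbc : (D ∩ b).card = 0 := by rw [hDb]; rfl
    have htot := card_inter_four (b := b) ((hbS b hbP).trans (le_of_eq hSeq.symm))
      dXY dXZ dXD dYZ dYD dZD
    rw [hDbc, hcard3 b hbP] at htot
    -- (Y ∩ b).card ≤ 1
    have hYb : (Y ∩ b).card ≤ 1 := by
      by_contra hgt
      obtain ⟨p, hp, q, hq, hpq⟩ := Finset.one_lt_card.mp (show 1 < (Y ∩ b).card by omega)
      have hpY := Finset.mem_of_mem_inter_left hp
      have hpD : p ∉ D := fun h => Finset.disjoint_left.mp dYD hpY h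
      obtain ⟨-, hbW⟩ := localize_almost hSTS hYDS hC1 hbBl hpq
        (Finset.mem_union_left _ hpY)
        (Finset.mem_union_left _ (Finset.mem_of_mem_inter_left hq))
        (Finset.mem_of_mem_inter_right hp) (Finset.mem_of_mem_inter_right hq) hpD
      apply hno b hbP
      intro a ha
      rcases Finset.mem_union.mp (hbW ha) with h | h
      · exact h
      · exact absurd (Finset.mem_inter_of_mem h ha) (by rw [Finset.eq_empty_iff_forall_notMem] at hDb; exact hDb a)
    -- (X ∩ b).card ≠ 2
    have hXb : (X ∩ b).card ≠ 2 := by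
      intro h2
      obtain ⟨p, hp, q, hq, hpq⟩ := Finset.one_lt_card.mp (show 1 < (X ∩ b).card by omega)
      have hbW : b ⊆ X ∪ D := localize_sub hSTS hXDS hC0 hC0sub hbBl hpq
        (Finset.mem_union_left _ (Finset.mem_of_mem_inter_left hp))
        (Finset.mem_union_left _ (Finset.mem_of_mem_inter_left hq))
        (Finset.mem_of_mem_inter_right hp) (Finset.mem_of_mem_inter_right hq)
      have hbX : b ⊆ X := by
        intro a ha
        rcases Finset.mem_union.mp (hbW ha) with h | h
        · exact h
        · exact absurd (Finset.mem_inter_of_mem h ha)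
            (by rw [Finset.eq_empty_iff_forall_notMem] at hDb; exact hDb a)
      have : X ∩ b = b := Finset.inter_eq_right.mpr hbX
      rw [this, hcard3 b hbP] at h2
      omega
    -- (Z ∩ b).card ≠ 2
    have hZb : (Z ∩ b).card ≠ 2 := by
      intro h2
      obtain ⟨p, hp, q, hq, hpq⟩ := Finset.one_lt_card.mp (show 1 < (Z ∩ b).card by omega)
      have hpZ := Finset.mem_of_mem_inter_left hp
      have hpD : p ∉ D := fun h => Finset.disjoint_left.mp dZD hpZ h
      obtain ⟨-, hbW⟩ := localize_almost hSTS hZDS hC2 hbBl hpq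
        (Finset.mem_union_left _ hpZ)
        (Finset.mem_union_left _ (Finset.mem_of_mem_inter_left hq))
        (Finset.mem_of_mem_inter_right hp) (Finset.mem_of_mem_inter_right hq) hpD
      have hbZ : b ⊆ Z := by
        intro a ha
        rcases Finset.mem_union.mp (hbW ha) with h | h
        · exact h
        · exact absurd (Finset.mem_inter_of_mem h ha)
            (by rw [Finset.eq_empty_iff_forall_notMem] at hDb; exact hDb a)
      have : Z ∩ b = b := Finset.inter_eq_right.mpr hbZ
      rw [this, hcard3 b hbP] at h2
      omega
    split_ifs with h3 <;> omega
  -- summation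
  have hsumX : ∑ b ∈ P, (X ∩ b).card = 6 := by rw [parclass_sum hP hXS, hX]
  have hsumY : ∑ b ∈ P, (Y ∩ b).card = 6 := by rw [parclass_sum hP hYSub, hY]
  have hb'memE : b' ∈ P.erase bb := Finset.mem_erase.mpr ⟨fun h => hbbne h.symm, hb'P⟩
  have splitsum : ∀ f : Finset α → ℕ,
      ∑ b ∈ P, f b = f bb + f b' + ∑ b ∈ O, f b := by
    intro f
    rw [← Finset.add_sum_erase P f hbbP, ← Finset.add_sum_erase _ f hb'memE, hO]
    ring
  have hOX : ∑ b ∈ O, (X ∩ b).card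
      = ∑ b ∈ O, (Y ∩ b).card + 3 * ∑ b ∈ O, (if (X ∩ b).card = 3 then 1 else 0) := by
    rw [Finset.sum_congr rfl hOclass, Finset.sum_add_distrib, Finset.mul_sum]
  rw [splitsum] at hsumX hsumY
  rw [hOX] at hsumX
  rw [hXbb, hYbb] at *
  rcases hb'cases with ⟨h1, h2⟩ | h1 <;> rw [h1] at hsumY <;> [rw [h2] at hsumX; skip] <;> omega

end ClassInside

section Key
variable {S : Finset α} {Bl : Finset (Finset α)}

lemma key_lemma {X Y Z D : Finset α} (hSTS : IsSTS S Bl)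
    (hSeq : X ∪ Y ∪ Z ∪ D = S)
    (hX : X.card = 6) (hY : Y.card = 6) (hD : D.card = 3)
    (dXY : Disjoint X Y) (dXZ : Disjoint X Z) (dXD : Disjoint X D)
    (dYZ : Disjoint Y Z) (dYD : Disjoint Y D) (dZD : Disjoint Z D)
    (hpet : FlowerPetals Bl D X Y Z)
    (hunique : ∃! B9 : Finset (Finset α),
      ∃ S9 : Finset α, B9 ⊆ Bl ∧ S9 ⊆ S ∧ S9.card = 9 ∧ IsSTS S9 B9) :
    ¬ IsResolvable S Bl := by
  obtain ⟨⟨C0, hC0sub, hC0⟩, ⟨C1, hC1⟩, ⟨C2, hC2⟩⟩ := hpet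
  have hXS : X ⊆ S := hSeq ▸ (Finset.subset_union_left.trans Finset.subset_union_left).trans
    Finset.subset_union_left
  have hYSub : Y ⊆ S := hSeq ▸ (Finset.subset_union_right.trans Finset.subset_union_left).trans
    Finset.subset_union_left
  have hDS : D ⊆ S := hSeq ▸ Finset.subset_union_right
  have hXDS : X ∪ D ⊆ S := Finset.union_subset hXS hDS
  have hYDS : Y ∪ D ⊆ S := Finset.union_subset hYSub hDS
  -- D is not a block
  have hDBl : D ∉ Bl := by
    intro hDBl
    have h9X : (X ∪ D).card = 9 := by rw [Finset.card_union_of_disjoint dXD, hX, hD]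
    have h9Y : (Y ∪ D).card = 9 := by rw [Finset.card_union_of_disjoint dYD, hY, hD]
    obtain ⟨B9, -, hu⟩ := hunique
    have w1 : C0 = B9 := hu C0 ⟨X ∪ D, hC0sub, hXDS, h9X, hC0⟩
    have w2 : insert D C1 = B9 := hu (insert D C1)
      ⟨Y ∪ D, Finset.insert_subset hDBl hC1.1, hYDS, h9Y, hC1.2.2⟩
    have heq : C0 = insert D C1 := w1.trans w2.symm
    obtain ⟨x, hx⟩ := Finset.card_pos.mp (show 0 < X.card by rw [hX]; norm_num)
    obtain ⟨d, hd⟩ := Finset.card_pos.mp (show 0 < D.card by rw [hD]; norm_num)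
    have hxd : x ≠ d := fun h => Finset.disjoint_left.mp dXD hx (h ▸ hd)
    obtain ⟨c, ⟨hc, hxc, hdc⟩, -⟩ := hC0.2 x (Finset.mem_union_left _ hx)
      d (Finset.mem_union_right _ hd) hxd
    have hcY : c ⊆ Y ∪ D := (hC1.2.2.1 c (heq ▸ hc)).1
    rcases Finset.mem_union.mp (hcY hxc) with h | h
    · exact Finset.disjoint_left.mp dXY hx h
    · exact Finset.disjoint_left.mp dXD hx h
  rintro ⟨classes, hclasses, hcover⟩
  obtain ⟨d1, d2, d3, h12, h13, h23, hDeq⟩ := Finset.card_eq_three.mp hD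
  have hmemD : ∀ d, d ∈ D ↔ (d = d1 ∨ d = d2 ∨ d = d3) := by
    intro d; rw [hDeq]; simp
  -- construct the block covering a given pair of stem points
  have getb : ∀ p q r : α, p ∈ D → q ∈ D → r ∈ D → p ≠ q →
      (∀ s ∈ D, s = p ∨ s = q ∨ s = r) →
      ∃ b, b ∈ Bl ∧ b ⊆ X ∪ D ∧ p ∈ b ∧ q ∈ b ∧ r ∉ b ∧ D ∩ b = D.erase r := by
    intro p q r hp hq hr hpq hall
    obtain ⟨c, ⟨hc, hpc, hqc⟩, -⟩ := hC0.2 p (Finset.mem_union_right _ hp)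
      q (Finset.mem_union_right _ hq) hpq
    have hcBl : c ∈ Bl := hC0sub hc
    have hcX : c ⊆ X ∪ D := (hC0.1 c hc).1
    have hrc : r ∉ c := by
      intro hrc
      have hsub : D ⊆ c := by
        intro s hs
        rcases hall s hs with h | h | h
        · exact h ▸ hpc
        · exact h ▸ hqc
        · exact h ▸ hrc
      have hcD : D = c := Finset.eq_of_subset_of_card_le hsub
        (by rw [(hSTS.1 c hcBl).2, hD])
      exact hDBl (hcD ▸ hcBl)
    have hDc : D ∩ c = D.erase r := by
      ext s
      simp only [Finset.mem_inter, Finset.mem_erase]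
      constructor
      · rintro ⟨hsD, hsc⟩
        exact ⟨fun h => hrc (h ▸ hsc), hsD⟩
      · rintro ⟨hsr, hsD⟩
        refine ⟨hsD, ?_⟩
        rcases hall s hsD with h | h | h
        · exact h ▸ hpc
        · exact h ▸ hqc
        · exact absurd h hsr
    exact ⟨c, hcBl, hcX, hpc, hqc, hrc, hDc⟩
  have hd1 : d1 ∈ D := (hmemD d1).mpr (Or.inl rfl)
  have hd2 : d2 ∈ D := (hmemD d2).mpr (Or.inr (Or.inl rfl))
  have hd3 : d3 ∈ D := (hmemD d3).mpr (Or.inr (Or.inr rfl))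
  obtain ⟨b3, hb3Bl, hb3X, hd1b3, hd2b3, hd3b3, hDb3⟩ :=
    getb d1 d2 d3 hd1 hd2 hd3 h12 (fun s hs => (hmemD s).mp hs)
  obtain ⟨b2, hb2Bl, hb2X, hd1b2, hd3b2, hd2b2, hDb2⟩ :=
    getb d1 d3 d2 hd1 hd3 hd2 h13 (fun s hs => by rcases (hmemD s).mp hs with h|h|h <;> tauto)
  obtain ⟨b1, hb1Bl, hb1X, hd2b1, hd3b1, hd1b1, hDb1⟩ :=
    getb d2 d3 d1 hd2 hd3 hd1 h23 (fun s hs => by rcases (hmemD s).mp hs with h|h|h <;> tauto)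
  obtain ⟨Q1, ⟨hQ1cl, hb1Q1⟩, -⟩ := hcover b1 hb1Bl
  obtain ⟨Q2, ⟨hQ2cl, hb2Q2⟩, -⟩ := hcover b2 hb2Bl
  obtain ⟨Q3, ⟨hQ3cl, hb3Q3⟩, -⟩ := hcover b3 hb3Bl
  have hQ1par := hclasses Q1 hQ1cl
  have hQ2par := hclasses Q2 hQ2cl
  have hQ3par := hclasses Q3 hQ3cl
  have hDS3 : d3 ∈ S := hDS hd3
  have hDS2 : d2 ∈ S := hDS hd2
  have hDS1 : d1 ∈ S := hDS hd1
  -- the classes are pairwise distinct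
  have hQ12 : Q1 ≠ Q2 := by
    intro h
    obtain ⟨c, -, hcu⟩ := hQ1par.2 d3 hDS3
    have := (hcu b1 ⟨hb1Q1, hd3b1⟩).trans (hcu b2 ⟨h ▸ hb2Q2, hd3b2⟩).symm
    exact hd1b1 (this ▸ hd1b2)
  have hQ13 : Q1 ≠ Q3 := by
    intro h
    obtain ⟨c, -, hcu⟩ := hQ1par.2 d2 hDS2
    have := (hcu b1 ⟨hb1Q1, hd2b1⟩).trans (hcu b3 ⟨h ▸ hb3Q3, hd2b3⟩).symm
    exact hd3b3 (this ▸ hd3b1)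
  have hQ23 : Q2 ≠ Q3 := by
    intro h
    obtain ⟨c, -, hcu⟩ := hQ2par.2 d1 hDS1
    have := (hcu b2 ⟨hb2Q2, hd1b2⟩).trans (hcu b3 ⟨h ▸ hb3Q3, hd1b3⟩).symm
    exact hd3b3 (this ▸ hd3b2)
  -- each class contains a block inside Y
  obtain ⟨e1, he1Q1, he1Y⟩ := class_has_inside hSTS hSeq dXY dXZ dXD dYZ dYD dZD hX hY hD
    hC0sub hC0 hC1 hC2 hQ1par hb1Q1 hb1X hd1 hd1b1 hDb1
  obtain ⟨e2, he2Q2, he2Y⟩ := class_has_inside hSTS hSeq dXY dXZ dXD dYZ dYD dZD hX hY hD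
    hC0sub hC0 hC1 hC2 hQ2par hb2Q2 hb2X hd2 hd2b2 hDb2
  obtain ⟨e3, he3Q3, he3Y⟩ := class_has_inside hSTS hSeq dXY dXZ dXD dYZ dYD dZD hX hY hD
    hC0sub hC0 hC1 hC2 hQ3par hb3Q3 hb3X hd3 hd3b3 hDb3
  have he1Bl : e1 ∈ Bl := hQ1par.1 he1Q1
  have he2Bl : e2 ∈ Bl := hQ2par.1 he2Q2
  have he3Bl : e3 ∈ Bl := hQ3par.1 he3Q3
  have hediff : ∀ {e Qa Qb : _}, e ∈ Bl → Qa ∈ classes → Qb ∈ classes → e ∈ Qa → e ∈ Qb →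
      Qa ≠ Qb → False := by
    intro e Qa Qb heBl hQa hQb heQa heQb hne
    obtain ⟨R, -, hRu⟩ := hcover e heBl
    exact hne ((hRu Qa ⟨hQa, heQa⟩).trans (hRu Qb ⟨hQb, heQb⟩).symm)
  have he12 : e1 ≠ e2 := fun h => hediff he1Bl hQ1cl hQ2cl he1Q1 (h ▸ he2Q2) hQ12
  have he13 : e1 ≠ e3 := fun h => hediff he1Bl hQ1cl hQ3cl he1Q1 (h ▸ he3Q3) hQ13
  have he23 : e2 ≠ e3 := fun h => hediff he2Bl hQ2cl hQ3cl he2Q2 (h ▸ he3Q3) hQ23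
  have hd12 := inside_blocks_disjoint hSTS hYDS dYD hY hD hC1 he1Bl he2Bl he1Y he2Y he12
  have hd13 := inside_blocks_disjoint hSTS hYDS dYD hY hD hC1 he1Bl he3Bl he1Y he3Y he13
  have hd23 := inside_blocks_disjoint hSTS hYDS dYD hY hD hC1 he2Bl he3Bl he2Y he3Y he23
  have hcard : (e1 ∪ e2 ∪ e3).card = 9 := by
    rw [Finset.card_union_of_disjoint (Finset.disjoint_union_left.mpr ⟨hd13, hd23⟩),
        Finset.card_union_of_disjoint hd12, (hSTS.1 e1 he1Bl).2, (hSTS.1 e2 he2Bl).2,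
        (hSTS.1 e3 he3Bl).2]
  have hsub : e1 ∪ e2 ∪ e3 ⊆ Y := Finset.union_subset (Finset.union_subset he1Y he2Y) he3Y
  have := Finset.card_le_card hsub
  rw [hcard, hY] at this
  omega

end Key


theorem flower_unique_sts9_not_resolvable (S : Finset α) (Bl : Finset (Finset α))
    (A B C D : Finset α)
    (hSTS : IsSTS S Bl) (hS21 : S.card = 21)
    (hflower : IsFlower S Bl A B C D)
    (hunique : ∃! B9 : Finset (Finset α),
      ∃ S9 : Finset α, B9 ⊆ Bl ∧ S9 ⊆ S ∧ S9.card = 9 ∧ IsSTS S9 B9) :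
    ¬ IsResolvable S Bl := by
  obtain ⟨hSeq, hA, hB, hC, hD, dAB, dAC, dAD, dBC, dBD, dCD, hpet⟩ := hflower
  rcases hpet with h | h | h
  · exact key_lemma hSTS hSeq hA hB hD dAB dAC dAD dBC dBD dCD h hunique
  · refine key_lemma hSTS ?_ hB hA hD dAB.symm dBC dBD dAC dAD dCD h hunique
    rw [Finset.union_comm B A]; exact hSeq
  · refine key_lemma hSTS ?_ hC hA hD dAC.symm dBC.symm dCD dAB dAD dBD h hunique
    rw [show C ∪ A ∪ B = A ∪ B ∪ C by ext a; simp; tauto]; exact hSeq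
end
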